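/- arXiv:1209.1269 — 4 statements merged into one kernel-verified Lean document; each statement's English description precedes it below -/
import Mathlib

section
/- Let (H,K) be a strong Shoda pair of a finite group G, N = N_G(K), k = [H:K], and h ∈ H with H = ⟨h,K⟩. The conjugation action of N/H on the cyclic group H/K is faithful and induces an embedding of N/H into Gal(ℚ(ζ_k)/ℚ); let F = ℚ(ζ_k)^{N/H} be the corresponding fixed field. Then [F:ℚ] = φ(k)/[N:H] (φ Euler's totient), and F is totally real if and only if h·h^n ∈ K for some n ∈ N. -/
/- Common definitions for formalizing "Group rings of finite strongly monomial
groups: central units and primitive idempotents" (arXiv:1209.1269). -/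

open scoped BigOperators

namespace ArXiv12091269

open scoped Classical

noncomputable section

/-- product of the values of `f` over a finite set, in a (possibly
noncommutative) monoid; in all uses below the factors commute, so that the
result does not depend on the enumeration order. -/
def finProd {alpha M : Type*} [Monoid M] (s : Finset alpha) (f : alpha → M) : M :=
  (s.toList.map f).prod

variable {G : Type*} [Group G]

instance (priority := 100) [Finite G] : Finite (Subgroup G) :=
  Finite.of_injective (fun S => (S : Set G)) SetLike.coe_injective

/-- `Ĥ = (1/|H|) ∑_{h ∈ H} h` in `ℚG`. -/
def hatQ [Finite G] (S : Subgroup G) : MonoidAlgebra ℚ G :=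
  (Nat.card S : ℚ)⁻¹ • ∑ x ∈ (S : Set G).toFinite.toFinset, MonoidAlgebra.of ℚ G x

/-- `M` is a minimal element of the set of subgroups of `H` that are normal in `H`
and contain `K` properly. -/
def IsMinNormalAbove (H K M : Subgroup G) : Prop :=
  M ≤ H ∧ K < M ∧ (∀ h ∈ H, ∀ x ∈ M, h * x * h⁻¹ ∈ M) ∧
    ∀ M' : Subgroup G, M' ≤ H → K < M' →
      (∀ h ∈ H, ∀ x ∈ M', h * x * h⁻¹ ∈ M') → M' ≤ M → M' = M

/-- `ε(H,K) = K̂ ∏ (1 - M̂)`, the product running over the minimal normal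
subgroups of `H` containing `K` properly; `ε(H,H) = Ĥ`. -/
def epsQ [Finite G] (H K : Subgroup G) : MonoidAlgebra ℚ G :=
  if K = H then hatQ H
  else hatQ K * finProd {M | IsMinNormalAbove H K M}.toFinite.toFinset (fun M => 1 - hatQ M)

/-- conjugate `α^g = g⁻¹ α g` in `ℚG`. -/
def aconj (g : G) (α : MonoidAlgebra ℚ G) : MonoidAlgebra ℚ G :=
  MonoidAlgebra.of ℚ G g⁻¹ * α * MonoidAlgebra.of ℚ G g

/-- `e(G,H,K)`, the sum of the distinct `G`-conjugates of `ε(H,K)`. -/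
def eGHK [Finite G] (H K : Subgroup G) : MonoidAlgebra ℚ G :=
  ∑ β ∈ (Set.range fun g : G => aconj g (epsQ H K)).toFinite.toFinset, β

/-- `(H,K)` is a strong Shoda pair of `G`: `K ≤ H ⊴ N_G(K)`, `H/K` is cyclic and
a maximal abelian subgroup of `N_G(K)/K`, and distinct `G`-conjugates of `ε(H,K)`
are orthogonal. -/
def IsStrongShodaPair [Finite G] (H K : Subgroup G) : Prop :=
  K ≤ H ∧ H ≤ Subgroup.normalizer (K : Set G) ∧
  (∀ n ∈ Subgroup.normalizer (K : Set G), ∀ x ∈ H, n * x * n⁻¹ ∈ H) ∧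
  (∃ h ∈ H, ∀ x ∈ H, ∃ z : ℤ, x⁻¹ * h ^ z ∈ K) ∧
  (∀ x ∈ H, ∀ y ∈ H, x * y * x⁻¹ * y⁻¹ ∈ K) ∧
  (∀ B : Subgroup G, K ≤ B → B ≤ Subgroup.normalizer (K : Set G) →
      (∀ x ∈ B, ∀ y ∈ B, x * y * x⁻¹ * y⁻¹ ∈ K) → H ≤ B → B = H) ∧
  (∀ g g' : G, aconj g (epsQ H K) ≠ aconj g' (epsQ H K) →
      aconj g (epsQ H K) * aconj g' (epsQ H K) = 0)

/-- a primitive central idempotent of a ring. -/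
def IsPrimitiveCentralIdem {R : Type*} [Ring R] (e : R) : Prop :=
  e ∈ Subring.center R ∧ e * e = e ∧ e ≠ 0 ∧
  ∀ f₁ f₂ : R, f₁ ∈ Subring.center R → f₂ ∈ Subring.center R →
    f₁ * f₁ = f₁ → f₂ * f₂ = f₂ → f₁ * f₂ = 0 → e = f₁ + f₂ → f₁ = 0 ∨ f₂ = 0

/-- a primitive idempotent of the (corner) ring `eRe` determined by a central
idempotent `e` of `R`; for `e = 1` this is a primitive idempotent of `R`. -/
def IsPrimIdemInCorner {R : Type*} [Ring R] (e f : R) : Prop :=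
  f ≠ 0 ∧ f * f = f ∧ f * e = f ∧ e * f = f ∧
  ∀ f₁ f₂ : R, f₁ * e = f₁ → e * f₁ = f₁ → f₂ * e = f₂ → e * f₂ = f₂ →
    f₁ * f₁ = f₁ → f₂ * f₂ = f₂ → f₁ * f₂ = 0 → f₂ * f₁ = 0 →
    f = f₁ + f₂ → f₁ = 0 ∨ f₂ = 0

/-- the Bass unit `u_{k,m}(x)` based on a torsion unit `x` of order `n`. -/
def bassUnit {R : Type*} [Ring R] (x : R) (n k m : ℕ) : R :=
  (∑ i ∈ Finset.range k, x ^ i) ^ m +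
    ((1 - (k : ℤ) ^ m) / (n : ℤ)) • ∑ i ∈ Finset.range n, x ^ i

/-- the cyclotomic unit `η_k(ξ)`, with the convention `η_k(1) = 1`. -/
def eta {F : Type*} [Field F] (k : ℕ) (ξ : F) : F :=
  if ξ = 1 then 1 else (1 - ξ ^ k) / (1 - ξ)

/-- a virtual basis of an abelian group: a set of multiplicatively independent
elements generating a subgroup of finite index. -/
def IsVirtualBasis {A : Type*} [CommGroup A] (S : Set A) : Prop :=
  (∀ f : A →₀ ℤ, ↑f.support ⊆ S → (f.prod fun a z => a ^ z) = 1 → f = 0) ∧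
  (Subgroup.closure S).FiniteIndex

/-- `ν` is a positive integer such that `u_{k,m}(1 - K̂ + g K̂)^ν ∈ ℤ G` for all
`g ∈ H` and all admissible `k`, `m`;  `n_{H,K}` is the least such `ν`. -/
def IsBassExpBound [Finite G] (H K : Subgroup G) (ν : ℕ) : Prop :=
  0 < ν ∧ ∀ g ∈ H, ∀ k m : ℕ, 0 < k → 0 < m →
    Nat.gcd k (orderOf g) = 1 → k ^ m ≡ 1 [MOD orderOf g] →
    ∀ w : G, ∃ z : ℤ,
      ((bassUnit (MonoidAlgebra.of ℚ G g * hatQ K + 1 - hatQ K) (orderOf g) k m) ^ ν).coeff w = z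

/-- the recursion defining the units `c_j^s(H,K,k,r)` (for the cyclic section `H/K`
of order `p^n` with distinguished generator `g` modulo `K`): `c` satisfies
`c s s = 1` and, for `j < s ≤ n`,
`c_j^s = (∏_{h ∈ H_j} u_{k,O_{p^n}(k) n_{H,K}}(g^{r p^{n-s}} h K̂ + 1 - K̂))^{p^{s-j-1}}
· ∏_{l=j+1}^{s-1} (c_l^s)⁻¹ · ∏_{l=0}^{j-1} (c_l^{s+l-j})⁻¹`,
where `H_j = ⟨g^{p^{n-j}}, K⟩`. -/
def SatisfiesC [Finite G] (K : Subgroup G) (g : G) (p n nHK k : ℕ) (r : ℤ)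
    (c : ℕ → ℕ → MonoidAlgebra ℚ G) : Prop :=
  (∀ s, s ≤ n → c s s = 1) ∧
  ∀ j s : ℕ, j < s → s ≤ n →
    c j s =
      (finProd ((((Subgroup.closure ({g ^ p ^ (n - j)} ∪ (K : Set G)) : Subgroup G) :
            Set G)).toFinite.toFinset)
          (fun h =>
            bassUnit (MonoidAlgebra.of ℚ G (g ^ (r * (p : ℤ) ^ (n - s)) * h) * hatQ K
                + 1 - hatQ K)
              (orderOf (g ^ (r * (p : ℤ) ^ (n - s)) * h)) k
              (orderOf ((k : ZMod (p ^ n))) * nHK))) ^ p ^ (s - j - 1) *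
      (List.map (fun l => Ring.inverse (c l s)) (List.range' (j + 1) (s - (j + 1)))).prod *
      (List.map (fun l => Ring.inverse (c l (s + l - j))) (List.range j)).prod

/-- the component `R·e` of a ring determined by a central idempotent `e`,
as a non-unital subring. -/
def componentNUS {R : Type*} [Ring R] (e : R) : NonUnitalSubring R where
  carrier := {x | x * e = x}
  add_mem' := by
    intro x y hx hy
    simp only [Set.mem_setOf_eq] at *
    rw [add_mul, hx, hy]
  mul_mem' := by
    intro x y hx hy
    simp only [Set.mem_setOf_eq] at *
    rw [mul_assoc, hy]
  neg_mem' := by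
    intro x hx
    simp only [Set.mem_setOf_eq] at *
    rw [neg_mul, hx]
  zero_mem' := by simp

/-- the corner `E·R·E` determined by an element `E` of a ring,
as a non-unital subring. -/
def cornerNUS {R : Type*} [Ring R] (E : R) : NonUnitalSubring R where
  carrier := Set.range fun γ => E * γ * E
  add_mem' := by
    rintro _ _ ⟨γ, rfl⟩ ⟨δ, rfl⟩
    exact ⟨γ + δ, by noncomm_ring⟩
  mul_mem' := by
    rintro _ _ ⟨γ, rfl⟩ ⟨δ, rfl⟩
    exact ⟨γ * E * E * δ, by noncomm_ring⟩
  neg_mem' := by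
    rintro _ ⟨γ, rfl⟩
    exact ⟨-γ, by noncomm_ring⟩
  zero_mem' := ⟨0, by noncomm_ring⟩

theorem of_mul_of_inv_mul (g : G) (X : MonoidAlgebra ℚ G) :
    MonoidAlgebra.of ℚ G g * (MonoidAlgebra.of ℚ G g⁻¹ * X) = X := by
  rw [← mul_assoc, ← map_mul, mul_inv_cancel, map_one, one_mul]

theorem aconj_add (g : G) (α β : MonoidAlgebra ℚ G) :
    aconj g (α + β) = aconj g α + aconj g β := by
  simp [aconj, mul_add, add_mul]

theorem aconj_mul (g : G) (α β : MonoidAlgebra ℚ G) :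
    aconj g (α * β) = aconj g α * aconj g β := by
  simp only [aconj, mul_assoc, of_mul_of_inv_mul]

theorem aconj_neg (g : G) (α : MonoidAlgebra ℚ G) : aconj g (-α) = - aconj g α := by
  simp [aconj]

/-- the subring of elements of a field `L` fixed by a subgroup `A` of `Gal(L/ℚ)`. -/
def fixedSubring {L : Type*} [Field L] [Algebra ℚ L] (A : Subgroup (L ≃ₐ[ℚ] L)) :
    Subring L where
  carrier := {x | ∀ σ ∈ A, σ x = x}
  mul_mem' := by intro x y hx hy σ hσ; rw [map_mul, hx σ hσ, hy σ hσ]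
  add_mem' := by intro x y hx hy σ hσ; rw [map_add, hx σ hσ, hy σ hσ]
  one_mem' := by intro σ hσ; rw [map_one]
  zero_mem' := by intro σ hσ; rw [map_zero]
  neg_mem' := by intro x hx σ hσ; rw [map_neg, hx σ hσ]

/-- the fixed ring `(ℚHε(H,K))^{N_G(K)}`: the subring of `ℚG` consisting of the
elements of `ℚHε(H,K)` invariant under conjugation by all elements of `N_G(K)`,
as a non-unital subring of `ℚG` (its identity element is `ε(H,K)`). -/
def shodaFixedNUS [Finite G] (H K : Subgroup G) :
    NonUnitalSubring (MonoidAlgebra ℚ G) where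
  carrier := {α | α ∈ Algebra.adjoin ℚ ((fun h : G => MonoidAlgebra.of ℚ G h) '' (H : Set G)) ∧
    α * epsQ H K = α ∧ ∀ nn ∈ Subgroup.normalizer (K : Set G), aconj nn α = α}
  add_mem' := by
    rintro x y ⟨hx1, hx2, hx3⟩ ⟨hy1, hy2, hy3⟩
    exact ⟨Subalgebra.add_mem _ hx1 hy1, by rw [add_mul, hx2, hy2],
      fun nn hnn => by rw [aconj_add, hx3 nn hnn, hy3 nn hnn]⟩
  mul_mem' := by
    rintro x y ⟨hx1, hx2, hx3⟩ ⟨hy1, hy2, hy3⟩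
    exact ⟨Subalgebra.mul_mem _ hx1 hy1, by rw [mul_assoc, hy2],
      fun nn hnn => by rw [aconj_mul, hx3 nn hnn, hy3 nn hnn]⟩
  neg_mem' := by
    rintro x ⟨hx1, hx2, hx3⟩
    exact ⟨Subalgebra.neg_mem _ hx1, by rw [neg_mul, hx2],
      fun nn hnn => by rw [aconj_neg, hx3 nn hnn]⟩
  zero_mem' := ⟨Subalgebra.zero_mem _, by rw [zero_mul],
      fun nn hnn => by simp [aconj]⟩

/-- the canonical ring homomorphism `ℤG → ℚG`. -/
def intToRat (G : Type*) [Group G] : MonoidAlgebra ℤ G →ₐ[ℤ] MonoidAlgebra ℚ G :=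
  MonoidAlgebra.lift ℤ (MonoidAlgebra ℚ G) G (MonoidAlgebra.of ℚ G)

/-- `ℚ(ζ_n)` as a cyclotomic extension of `ℚ`, for the algebra structure `DivisionRing.toRatAlgebra`
(which is no longer reducibly equal to `CyclotomicField.algebra`). -/
instance instIsCyclotomicExtensionCyclotomicFieldRat (n : ℕ) :
    IsCyclotomicExtension {n} ℚ (CyclotomicField n ℚ) := by
  exact CyclotomicField.instIsCyclotomicExtensionSingletonNatSetOfCharZero n ℚ


/-! Modulo `K`, the image `b` of `h` generates the cyclic normal subgroup `H/K` of `N/K`, of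
order `k`, so conjugation by `N` acts on it by `b ↦ b ^ u` with `u ∈ (ℤ/k)ˣ`: a character
`N → (ℤ/k)ˣ`. Maximality of `H/K` among the abelian subgroups of `N/K` says that `H/K` is its own
centralizer, so the kernel of this character is exactly `H`. Through
`Gal(ℚ(ζ_k)/ℚ) ≅ (ℤ/k)ˣ`, `A` is the image of the character, which gives `|A| = [N:H]` and,
by Galois theory, `[F:ℚ] = φ(k)/[N:H]`. Every complex embedding of `ℚ(ζ_k)` turns the
automorphism corresponding to `-1` into complex conjugation, so `F` is totally real iff `-1` is a
value of the character, i.e. iff some `n ∈ N` inverts `h` modulo `K`. -/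

section ConjugationCharacter

variable {Q : Type*} [Group Q] {b : Q} {k : ℕ} [NeZero k]

theorem pow_val_intCast (hb : orderOf b = k) (z : ℤ) : b ^ (z : ZMod k).val = b ^ z := by
  rw [← zpow_natCast, ZMod.val_intCast, ← hb, zpow_mod_orderOf]

theorem pow_val_eq_pow_val_iff (hb : orderOf b = k) {s t : ZMod k} :
    b ^ s.val = b ^ t.val ↔ s = t := by
  rw [pow_eq_pow_iff_modEq, hb, ← ZMod.natCast_eq_natCast_iff, ZMod.natCast_zmod_val,
    ZMod.natCast_zmod_val]

theorem conj_eq_pow_of_mem_zpowers {q x : Q} {m : ℕ} (hq : q⁻¹ * b * q = b ^ m)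
    (hx : x ∈ Subgroup.zpowers b) : q⁻¹ * x * q = x ^ m := by
  obtain ⟨z, rfl⟩ := hx
  have hconj : ∀ y : Q, q⁻¹ * y * q = MulAut.conj q⁻¹ y := fun y => by simp
  rw [hconj, map_zpow, ← hconj, hq, ← zpow_natCast, ← zpow_natCast, ← zpow_mul, ← zpow_mul,
    mul_comm]

def IsConjCharacter (U : Q →* (ZMod k)ˣ) (b : Q) : Prop :=
  ∀ q t, U q = t ↔ q⁻¹ * b * q = b ^ (t : ZMod k).val

theorem exists_isConjCharacter (hb : orderOf b = k)
    (hconj : ∀ q : Q, q⁻¹ * b * q ∈ Subgroup.zpowers b) :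
    ∃ U : Q →* (ZMod k)ˣ, IsConjCharacter U b := by
  have hexp : ∀ q : Q, ∃ t : ZMod k, q⁻¹ * b * q = b ^ t.val := fun q => by
    obtain ⟨z, hz⟩ := hconj q
    exact ⟨z, by rw [pow_val_intCast hb, ← hz]⟩
  choose f hf using hexp
  have hf_iff : ∀ q t, f q = t ↔ q⁻¹ * b * q = b ^ t.val := fun q t => by
    rw [hf q, pow_val_eq_pow_val_iff hb]
  have hmod : ∀ n : ℕ, b ^ (n % k) = b ^ n := fun n => by rw [← hb, pow_mod_orderOf]
  let F : Q →* ZMod k :=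
    { toFun := f
      map_one' := by
        rw [hf_iff, ← Int.cast_one, pow_val_intCast hb]
        simp
      map_mul' := fun q r => by
        rw [hf_iff, ZMod.val_mul, hmod, pow_mul,
          ← conj_eq_pow_of_mem_zpowers (hf r) ⟨_, zpow_natCast b (f q).val⟩, ← hf q]
        group }
  refine ⟨F.toHomUnits, fun q t => ?_⟩
  rw [Units.ext_iff, MonoidHom.coe_toHomUnits]
  exact hf_iff q t

variable {U : Q →* (ZMod k)ˣ}

theorem IsConjCharacter.conj_eq_zpow_iff (hU : IsConjCharacter U b) (hb : orderOf b = k)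
    (q : Q) (z : ℤ) : q⁻¹ * b * q = b ^ z ↔ (U q : ZMod k) = z := by
  rw [(hU q (U q)).mp rfl, ← pow_val_intCast hb, pow_val_eq_pow_val_iff hb]

theorem IsConjCharacter.commute_iff_eq_one (hU : IsConjCharacter U b) (hb : orderOf b = k)
    (q : Q) : Commute q b ↔ U q = 1 := by
  rw [Units.ext_iff, Units.val_one, ← Int.cast_one, ← hU.conj_eq_zpow_iff hb, zpow_one,
    mul_assoc, inv_mul_eq_iff_eq_mul, eq_comm]
  rfl

theorem IsConjCharacter.conj_eq_inv_iff (hU : IsConjCharacter U b) (hb : orderOf b = k)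
    (q : Q) : q⁻¹ * b * q = b⁻¹ ↔ U q = -1 := by
  rw [Units.ext_iff, Units.val_neg, Units.val_one, ← Int.cast_one, ← Int.cast_neg,
    ← hU.conj_eq_zpow_iff hb, zpow_neg_one]

theorem IsConjCharacter.ker_eq_zpowers (hU : IsConjCharacter U b) (hb : orderOf b = k)
    (hcent : ∀ q : Q, Commute q b → q ∈ Subgroup.zpowers b) :
    U.ker = Subgroup.zpowers b := by
  ext q
  rw [MonoidHom.mem_ker, ← hU.commute_iff_eq_one hb]
  exact ⟨hcent q, fun ⟨z, hz⟩ => hz ▸ (Commute.refl b).zpow_left z⟩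

end ConjugationCharacter

section StrongShodaPair

variable {H K : Subgroup G}

abbrev NormalizerQuot (K : Subgroup G) : Type _ :=
  Subgroup.normalizer (K : Set G) ⧸ K.subgroupOf (Subgroup.normalizer (K : Set G))

abbrev normalizerQuotMk (K : Subgroup G) :
    Subgroup.normalizer (K : Set G) →* NormalizerQuot K :=
  QuotientGroup.mk' _

def IsMaxAbelianModulo (H K : Subgroup G) : Prop :=
  ∀ B : Subgroup G, K ≤ B → B ≤ Subgroup.normalizer (K : Set G) →
    (∀ x ∈ B, ∀ y ∈ B, x * y * x⁻¹ * y⁻¹ ∈ K) → H ≤ B → B = H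

theorem normalizerQuotMk_eq_one_iff (x : Subgroup.normalizer (K : Set G)) :
    normalizerQuotMk K x = 1 ↔ (x : G) ∈ K := by
  rw [QuotientGroup.mk'_apply, QuotientGroup.eq_one_iff, Subgroup.mem_subgroupOf]

theorem normalizerQuotMk_eq_iff_inv_mul_mem (x y : Subgroup.normalizer (K : Set G)) :
    normalizerQuotMk K x = normalizerQuotMk K y ↔ (x : G)⁻¹ * y ∈ K := by
  rw [QuotientGroup.mk'_apply, QuotientGroup.mk'_apply, QuotientGroup.eq, Subgroup.mem_subgroupOf]
  rfl

theorem normalizerQuotMk_eq_iff_mul_inv_mem (x y : Subgroup.normalizer (K : Set G)) :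
    normalizerQuotMk K x = normalizerQuotMk K y ↔ (x : G) * (y : G)⁻¹ ∈ K := by
  rw [← mul_inv_eq_one, ← map_inv, ← map_mul, normalizerQuotMk_eq_one_iff]
  rfl

theorem conj_normalizerQuotMk_eq_pow_iff (n x : Subgroup.normalizer (K : Set G)) (m : ℕ) :
    (normalizerQuotMk K n)⁻¹ * normalizerQuotMk K x * normalizerQuotMk K n =
        normalizerQuotMk K x ^ m ↔ (n : G)⁻¹ * x * n * ((x : G) ^ m)⁻¹ ∈ K := by
  rw [← map_inv, ← map_mul, ← map_mul, ← map_pow, normalizerQuotMk_eq_iff_mul_inv_mem]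
  rfl

theorem ker_normalizerQuotMk_le (hKH : K ≤ H) : (normalizerQuotMk K).ker ≤ H.subgroupOf _ := by
  rw [QuotientGroup.ker_mk']
  exact fun x hx => hKH hx

theorem mem_of_normalizerQuotMk_mem (hKH : K ≤ H) {x : Subgroup.normalizer (K : Set G)}
    (hx : normalizerQuotMk K x ∈ (H.subgroupOf _).map (normalizerQuotMk K)) : (x : G) ∈ H := by
  rwa [← Subgroup.mem_comap, Subgroup.comap_map_eq_self (ker_normalizerQuotMk_le hKH),
    Subgroup.mem_subgroupOf] at hx

theorem map_normalizerQuotMk_eq_zpowers {h : G} (hHN : H ≤ Subgroup.normalizer (K : Set G))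
    (hhH : h ∈ H) (hhgen : H = Subgroup.closure {h} ⊔ K) :
    (H.subgroupOf _).map (normalizerQuotMk K) =
      Subgroup.zpowers (normalizerQuotMk K ⟨h, hHN hhH⟩) := by
  refine le_antisymm ?_ (Subgroup.zpowers_le.mpr ⟨_, hhH, rfl⟩)
  rintro _ ⟨x, hx, rfl⟩
  have hHle : H ≤ ((Subgroup.zpowers (normalizerQuotMk K ⟨h, hHN hhH⟩)).comap
      (normalizerQuotMk K)).map (Subgroup.normalizer (K : Set G)).subtype := by
    rw [hhgen, sup_le_iff, Subgroup.closure_le, Set.singleton_subset_iff]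
    refine ⟨⟨_, Subgroup.mem_zpowers _, rfl⟩, fun y hy => ?_⟩
    refine ⟨⟨y, Subgroup.le_normalizer hy⟩, Subgroup.mem_comap.mpr ?_, rfl⟩
    rw [(normalizerQuotMk_eq_one_iff ⟨y, _⟩).mpr hy]
    exact one_mem _
  obtain ⟨y, hy, hyx⟩ := hHle hx
  rwa [← Subtype.ext hyx]

theorem orderOf_normalizerQuotMk {h : G} (hHN : H ≤ Subgroup.normalizer (K : Set G))
    (hhH : h ∈ H) (hhgen : H = Subgroup.closure {h} ⊔ K) :
    orderOf (normalizerQuotMk K ⟨h, hHN hhH⟩) = K.relIndex H := by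
  rw [← Nat.card_zpowers, ← map_normalizerQuotMk_eq_zpowers hHN hhH hhgen,
    ← Subgroup.relIndex_ker, QuotientGroup.ker_mk', Subgroup.relIndex_subgroupOf hHN]

theorem conj_normalizerQuotMk_mem_zpowers {h : G} (hHN : H ≤ Subgroup.normalizer (K : Set G))
    (hHnormal : ∀ n ∈ Subgroup.normalizer (K : Set G), ∀ x ∈ H, n * x * n⁻¹ ∈ H)
    (hhH : h ∈ H) (hhgen : H = Subgroup.closure {h} ⊔ K) (q : NormalizerQuot K) :
    q⁻¹ * normalizerQuotMk K ⟨h, hHN hhH⟩ * q ∈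
      Subgroup.zpowers (normalizerQuotMk K ⟨h, hHN hhH⟩) := by
  obtain ⟨n, rfl⟩ := QuotientGroup.mk'_surjective _ q
  rw [← map_normalizerQuotMk_eq_zpowers hHN hhH hhgen]
  refine ⟨n⁻¹ * ⟨h, hHN hhH⟩ * n, Subgroup.mem_subgroupOf.mpr ?_, by simp⟩
  simpa using hHnormal _ (inv_mem n.2) h hhH

theorem mem_zpowers_of_commute {h : G} (hHN : H ≤ Subgroup.normalizer (K : Set G))
    (hhH : h ∈ H) (hhgen : H = Subgroup.closure {h} ⊔ K) (hmax : IsMaxAbelianModulo H K)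
    {q : NormalizerQuot K} (hq : Commute q (normalizerQuotMk K ⟨h, hHN hhH⟩)) :
    q ∈ Subgroup.zpowers (normalizerQuotMk K ⟨h, hHN hhH⟩) := by
  obtain ⟨n, rfl⟩ := QuotientGroup.mk'_surjective _ q
  set b := normalizerQuotMk K ⟨h, hHN hhH⟩
  set S := Subgroup.closure {normalizerQuotMk K n, b}
  have hS : IsMulCommutative S := Subgroup.isMulCommutative_closure <| by
    simp only [Set.mem_insert_iff, Set.mem_singleton_iff]
    rintro x (rfl | rfl) y (rfl | rfl) <;> first | rfl | exact hq | exact hq.symm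
  set B := (S.comap (normalizerQuotMk K)).map (Subgroup.normalizer (K : Set G)).subtype
  have hKB : K ≤ B := fun x hx => ⟨⟨x, Subgroup.le_normalizer hx⟩,
    Subgroup.mem_comap.mpr (by rw [(normalizerQuotMk_eq_one_iff _).mpr hx]; exact one_mem _), rfl⟩
  have hHB : H ≤ B := fun x hx => ⟨⟨x, hHN hx⟩, by
    have hmem : normalizerQuotMk K ⟨x, hHN hx⟩ ∈ Subgroup.zpowers b := by
      rw [← map_normalizerQuotMk_eq_zpowers hHN hhH hhgen]; exact ⟨_, hx, rfl⟩
    exact Subgroup.zpowers_le.mpr (Subgroup.subset_closure (by simp)) hmem, rfl⟩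
  have hBcomm : ∀ x ∈ B, ∀ y ∈ B, x * y * x⁻¹ * y⁻¹ ∈ K := by
    rintro _ ⟨x, hx, rfl⟩ _ ⟨y, hy, rfl⟩
    refine (normalizerQuotMk_eq_one_iff (x * y * x⁻¹ * y⁻¹)).mp ?_
    simp only [map_mul, map_inv]
    rw [setLike_mul_comm (Subgroup.mem_comap.mp hx) (Subgroup.mem_comap.mp hy)]
    group
  have hBH := hmax B hKB (Subgroup.map_subtype_le _) hBcomm hHB
  have hnB : (n : G) ∈ B := ⟨n, Subgroup.subset_closure (by simp), rfl⟩
  rw [← map_normalizerQuotMk_eq_zpowers hHN hhH hhgen]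
  exact ⟨n, hBH ▸ hnB, rfl⟩

theorem forall_inv_mul_conj_mem_iff {h : G} (hKH : K ≤ H)
    (hHN : H ≤ Subgroup.normalizer (K : Set G)) (hhH : h ∈ H)
    (hhgen : H = Subgroup.closure {h} ⊔ K) (hab : ∀ x ∈ H, ∀ y ∈ H, x * y * x⁻¹ * y⁻¹ ∈ K)
    (hmax : IsMaxAbelianModulo H K) {n : G} (hn : n ∈ Subgroup.normalizer (K : Set G)) :
    (∀ x ∈ H, x⁻¹ * (n⁻¹ * x * n) ∈ K) ↔ n ∈ H := by
  refine ⟨fun hcomm => ?_,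
    fun hnH x hx => by simpa [mul_assoc] using hab _ (inv_mem hx) _ (inv_mem hnH)⟩
  have hconj : normalizerQuotMk K ⟨h, hHN hhH⟩ =
      normalizerQuotMk K (⟨n, hn⟩⁻¹ * ⟨h, hHN hhH⟩ * ⟨n, hn⟩) :=
    (normalizerQuotMk_eq_iff_inv_mul_mem _ _).mpr (hcomm h hhH)
  have hq : Commute (normalizerQuotMk K ⟨n, hn⟩) (normalizerQuotMk K ⟨h, hHN hhH⟩) := by
    simp only [map_mul, map_inv] at hconj
    rwa [mul_assoc, eq_inv_mul_iff_mul_eq] at hconj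
  have hmem := mem_zpowers_of_commute hHN hhH hhgen hmax hq
  rw [← map_normalizerQuotMk_eq_zpowers hHN hhH hhgen] at hmem
  exact mem_of_normalizerQuotMk_mem hKH hmem

theorem exists_conj_character_normalizer {h : G} {k : ℕ} [NeZero k] (hKH : K ≤ H)
    (hHN : H ≤ Subgroup.normalizer (K : Set G))
    (hHnormal : ∀ n ∈ Subgroup.normalizer (K : Set G), ∀ x ∈ H, n * x * n⁻¹ ∈ H)
    (hmax : IsMaxAbelianModulo H K) (hhH : h ∈ H) (hhgen : H = Subgroup.closure {h} ⊔ K)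
    (hk : K.relIndex H = k) :
    ∃ V : Subgroup.normalizer (K : Set G) →* (ZMod k)ˣ,
      V.ker = H.subgroupOf _ ∧
      (∀ n t, V n = t ↔ ∀ x ∈ H, (n : G)⁻¹ * x * n * (x ^ (t : ZMod k).val)⁻¹ ∈ K) ∧
      ∀ n, V n = -1 ↔ h * ((n : G)⁻¹ * h * n) ∈ K := by
  have hzp := map_normalizerQuotMk_eq_zpowers hHN hhH hhgen
  have hb : orderOf (normalizerQuotMk K ⟨h, hHN hhH⟩) = k :=
    (orderOf_normalizerQuotMk hHN hhH hhgen).trans hk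
  obtain ⟨U, hU⟩ := exists_isConjCharacter hb
    (conj_normalizerQuotMk_mem_zpowers hHN hHnormal hhH hhgen)
  refine ⟨U.comp (normalizerQuotMk K), ?_, fun n t => ?_, fun n => ?_⟩
  · rw [← MonoidHom.comap_ker,
      hU.ker_eq_zpowers hb fun q => mem_zpowers_of_commute hHN hhH hhgen hmax, ← hzp,
      Subgroup.comap_map_eq_self (ker_normalizerQuotMk_le hKH)]
  · rw [MonoidHom.comp_apply, hU]
    refine ⟨fun hconj x hx => ?_, fun hall => ?_⟩
    · exact (conj_normalizerQuotMk_eq_pow_iff n ⟨x, hHN hx⟩ _).mp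
        (conj_eq_pow_of_mem_zpowers hconj (hzp ▸ ⟨_, hx, rfl⟩))
    · exact (conj_normalizerQuotMk_eq_pow_iff n ⟨h, hHN hhH⟩ _).mpr (hall h hhH)
  · rw [MonoidHom.comp_apply, ← hU.conj_eq_inv_iff hb, ← mul_eq_one_iff_eq_inv',
      ← map_inv, ← map_mul, ← map_mul, ← map_mul, normalizerQuotMk_eq_one_iff]
    rfl

end StrongShodaPair

theorem pow_val_neg_one_eq_inv {M : Type*} [DivisionMonoid M] {n : ℕ} [NeZero n] {x : M}
    (hx : x ^ n = 1) : x ^ (-1 : ZMod n).val = x⁻¹ := by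
  refine eq_inv_of_mul_eq_one_left ?_
  obtain ⟨m, hm⟩ : n ∣ (-1 : ZMod n).val + 1 := (ZMod.natCast_eq_zero_iff _ _).mp (by simp)
  rw [← pow_succ, hm, pow_mul, hx, one_pow]

section CyclotomicFixedField

open IsCyclotomicExtension.Rat NumberField.ComplexEmbedding IntermediateField

variable (n : ℕ) [NeZero n] (L : Type*) [Field L] [NumberField L] [IsCyclotomicExtension {n} ℚ L]

def complexConjAut : L ≃ₐ[ℚ] L := (galEquivZMod n L).symm (-1)

variable {n L}

theorem galEquivZMod_complexConjAut : galEquivZMod n L (complexConjAut n L) = -1 :=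
  MulEquiv.apply_symm_apply _ _

theorem complexConjAut_apply_of_pow_eq_one {x : L} (hx : x ^ n = 1) :
    complexConjAut n L x = x⁻¹ := by
  rw [galEquivZMod_apply_of_pow_eq n L _ hx, galEquivZMod_complexConjAut, Units.val_neg,
    Units.val_one, pow_val_neg_one_eq_inv hx]

theorem isConj_complexConjAut (τ : L →+* ℂ) : IsConj τ (complexConjAut n L) := by
  have hζ := IsCyclotomicExtension.zeta_spec n ℚ L
  have hgen : ((starRingEnd ℂ).comp τ).toRatAlgHom =
      (τ.comp (complexConjAut n L : L →+* L)).toRatAlgHom := by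
    refine (hζ.powerBasis ℚ).algHom_ext ?_
    have hnorm : ‖τ (IsCyclotomicExtension.zeta n ℚ L)‖ = 1 :=
      Complex.norm_eq_one_of_pow_eq_one (by rw [← map_pow, hζ.pow_eq_one, map_one])
        (NeZero.ne n)
    simp [complexConjAut_apply_of_pow_eq_one hζ.pow_eq_one, ← Complex.inv_eq_conj hnorm]
  exact RingHom.ext fun x => DFunLike.congr_fun hgen x

theorem forall_im_eq_zero_iff_complexConjAut_mem (A : Subgroup (L ≃ₐ[ℚ] L)) :
    (∀ σ : fixedField A →+* ℂ, ∀ x : fixedField A, (σ x).im = 0) ↔ complexConjAut n L ∈ A := by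
  constructor
  · intro hreal
    obtain ⟨τ⟩ := (inferInstance : Nonempty (L →+* ℂ))
    rw [← fixingSubgroup_fixedField A]
    intro x
    apply τ.injective
    rw [AlgEquiv.smul_def, (isConj_complexConjAut τ).eq]
    exact Complex.conj_eq_iff_im.mpr (hreal (τ.comp (algebraMap (fixedField A) L)) x)
  · intro hc σ x
    rw [← Complex.conj_eq_iff_im, ← lift_algebraMap_apply L σ x, ← RCLike.star_def,
      ← (isConj_complexConjAut (n := n) (lift L σ)).eq]
    congr 1
    exact x.2 ⟨_, hc⟩

theorem finrank_fixedField_mul_card (A : Subgroup (L ≃ₐ[ℚ] L)) :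
    Module.finrank ℚ (fixedField A) * Nat.card A = n.totient := by
  rw [← finrank_fixedField_eq_card, Module.finrank_mul_finrank,
    IsCyclotomicExtension.finrank L (Polynomial.cyclotomic.irreducible_rat (NeZero.pos n))]

end CyclotomicFixedField

/-- For a strong Shoda pair `(H,K)` of `G` with `H = ⟨h,K⟩` and
`k = [H:K]`: the conjugation action of `N/H` on `H/K` is faithful, it embeds `N/H`
into `Gal(ℚ(ζ_k)/ℚ)`, and for the corresponding fixed field `F = ℚ(ζ_k)^{N/H}` one
has `[F:ℚ] = φ(k)/[N:H]`, and `F` is totally real iff `h·hⁿ ∈ K` for some `n ∈ N`. -/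
theorem statement1 {G : Type*} [Group G] [Fintype G]
    (H K : Subgroup G) (hSSP : IsStrongShodaPair H K)
    (h : G) (hhH : h ∈ H) (hhgen : H = Subgroup.closure {h} ⊔ K)
    (kp : ℕ+) (hkp : (kp : ℕ) = K.relIndex H)
    (A : Subgroup ((CyclotomicField kp ℚ) ≃ₐ[ℚ] (CyclotomicField kp ℚ)))
    (hA : A = Subgroup.closure {σ | ∃ nn ∈ Subgroup.normalizer (K : Set G), ∀ x ∈ H,
      nn⁻¹ * x * nn *
        (x ^ ((((IsCyclotomicExtension.autEquivPow (CyclotomicField kp ℚ)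
            (Polynomial.cyclotomic.irreducible_rat kp.pos)) σ :
              (ZMod (kp : ℕ))ˣ) : ZMod (kp : ℕ)).val))⁻¹ ∈ K}) :
    (∀ nn ∈ Subgroup.normalizer (K : Set G), ((∀ x ∈ H, x⁻¹ * (nn⁻¹ * x * nn) ∈ K) ↔ nn ∈ H)) ∧
    Nat.card A = H.relIndex (Subgroup.normalizer (K : Set G)) ∧
    (Module.finrank ℚ ↥(IntermediateField.fixedField A) : ℚ) =
      (Nat.totient (K.relIndex H) : ℚ) / (H.relIndex (Subgroup.normalizer (K : Set G)) : ℚ) ∧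
    ((∀ σ : ↥(IntermediateField.fixedField A) →+* ℂ,
        ∀ x : ↥(IntermediateField.fixedField A), (σ x).im = 0) ↔
      ∃ nn ∈ Subgroup.normalizer (K : Set G), h * (nn⁻¹ * h * nn) ∈ K) := by
  obtain ⟨hKH, hHN, hHnormal, -, hab, hmax, -⟩ := hSSP
  obtain ⟨V, hker, hV, hVneg⟩ := exists_conj_character_normalizer (k := kp) hKH hHN hHnormal
    hmax hhH hhgen hkp.symm
  set χ := IsCyclotomicExtension.Rat.galEquivZMod kp (CyclotomicField kp ℚ)
  have hA' : A = V.range.comap (χ : _ →* (ZMod kp)ˣ) := by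
    rw [hA, ← Subgroup.closure_eq (V.range.comap _)]
    congr 1
    ext σ
    simp only [Set.mem_ofPred_eq, SetLike.mem_coe, Subgroup.mem_comap, MonoidHom.mem_range,
      Subtype.exists, exists_prop, hV]
    rfl
  have hcard : Nat.card A = H.relIndex (Subgroup.normalizer (K : Set G)) := by
    rw [hA', Subgroup.comap_equiv_eq_map_symm, Subgroup.card_map_of_injective (MulEquiv.injective _),
      ← Subgroup.index_ker, hker]
    rfl
  refine ⟨fun nn hnn => forall_inv_mul_conj_mem_iff hKH hHN hhH hhgen hab hmax hnn, hcard, ?_, ?_⟩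
  · rw [← hkp, ← hcard, eq_div_iff (by exact_mod_cast Nat.card_pos.ne')]
    exact_mod_cast finrank_fixedField_mul_card A
  · rw [forall_im_eq_zero_iff_complexConjAut_mem (n := kp), hA', Subgroup.mem_comap,
      MonoidHom.coe_coe, galEquivZMod_complexConjAut]
    simp only [MonoidHom.mem_range, Subtype.exists, exists_prop, hVneg]

end

end ArXiv12091269
end

section
/- Let H be a finite group, K a normal subgroup and g ∈ H with H/K = ⟨gK⟩ cyclic. Let L be a subgroup with K ≤ L ≤ H and let ρ_L : ℚH → ℚ(ζ_{[H:L]}) be the ring homomorphism induced by a linear character of H with kernel L satisfying ρ_L(g) = ζ_{[H:L]}. Let M be an arbitrary subgroup of H, l = |L ∩ M|, t = [M : L ∩ M], and let k, m be positive integers with gcd(k,t) = 1 and k^m ≡ 1 (mod |gu|) for every u ∈ M. Then ∏_{u∈M} ρ_L( u_{k, m·n_{H,K}}( guK̂ + 1 − K̂ ) ) = η_k( ρ_L(g)^t )^{ l·m·n_{H,K} }. -/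
/- Common definitions for formalizing "Group rings of finite strongly monomial
groups: central units and primitive idempotents" (arXiv:1209.1269). -/

open scoped BigOperators

namespace ArXiv12091269

open scoped Classical

noncomputable section

variable {G : Type*} [Group G]

/-! The linear character `χ : H → Fˣ` afforded by `ρ` has kernel exactly `L`: it is trivial on
`L`, and `χ g` already has order `[H : L]`. Since `ρ (K̂) = 1`, the Bass unit
`u_{k,m n}(g u K̂ + 1 - K̂)` is sent to `u_{k,m n}(χ (g u)) = η_k(χ g · χ u)^{m n}`. As `u` runs
over `M`, `χ u` runs over the group `T` of `t`-th roots of unity, each value taken `l` times.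
Finally `∏_{w ∈ T} η_k(ζ w) = η_k(ζ^t)` for `k` prime to `t`: multiplying by `∏ (1 - ζ w) = 1 - ζ^t`
gives `∏ (1 - ζ^k w^k) = 1 - ζ^{k t}`, because `w ↦ w^k` permutes `T`; and if `ζ^t = 1`, then
`ζ ∈ T` and both sides are `1`. -/
theorem _root_.MonoidHom.ker_eq_of_le_of_orderOf_eq_index {A : Type*} [Group A] (χ : G →* A)
    {L : Subgroup G} [L.FiniteIndex] (hL : L ≤ χ.ker) {g : G} (hg : orderOf (χ g) = L.index) :
    χ.ker = L := by
  have hdvd : L.index ∣ χ.ker.index := by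
    rw [Subgroup.index_ker, ← hg, ← χ.coe_rangeRestrict, Subgroup.orderOf_coe]
    exact orderOf_dvd_natCard _
  have hpos : 0 < χ.ker.index := Nat.pos_of_dvd_of_pos (Subgroup.index_dvd_of_le hL)
    (Nat.pos_of_ne_zero Subgroup.FiniteIndex.index_ne_zero)
  refine (eq_of_le_of_not_lt hL fun hlt => ?_).symm
  exact (Subgroup.index_strictAnti hlt).not_ge (Nat.le_of_dvd hpos hdvd)

theorem _root_.MonoidHom.prod_comp_eq_prod_range_pow {A C : Type*} [Group A] [CommMonoid C]
    [Fintype G] (φ : G →* A) [Fintype φ.range] (f : A → C) :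
    ∏ x : G, f (φ x) = (∏ w : φ.range, f w) ^ Nat.card φ.ker := by
  classical
  let e := QuotientGroup.quotientKerEquivRange φ
  calc ∏ x : G, f (φ x) = ∏ p : (G ⧸ φ.ker) × φ.ker, f (e p.1) :=
        Fintype.prod_equiv Subgroup.groupEquivQuotientProdSubgroup _ _ fun x => rfl
    _ = (∏ q : G ⧸ φ.ker, f (e q)) ^ Nat.card φ.ker := by
        simp [Fintype.prod_prod_type, Finset.prod_pow, Nat.card_eq_fintype_card]
    _ = _ := by
        rw [Fintype.prod_equiv e.toEquiv (fun q => f (e q)) (fun w => f w) fun q => rfl]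

theorem _root_.MonoidHom.natCard_range_domRestrict {A : Type*} [Group A] (χ : G →* A)
    (M : Subgroup G) : Nat.card (χ.domRestrict M).range = χ.ker.relIndex M := by
  rw [← Subgroup.index_ker, MonoidHom.ker_domRestrict]
  rfl

theorem _root_.MonoidHom.natCard_ker_domRestrict {A : Type*} [Group A] (χ : G →* A)
    (M : Subgroup G) : Nat.card (χ.domRestrict M).ker = Nat.card ↥(χ.ker ⊓ M) := by
  rw [MonoidHom.ker_domRestrict, ← Subgroup.inf_subgroupOf_right]
  exact Nat.card_congr (Subgroup.subgroupOfEquivOfLe inf_le_right).toEquiv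

section Field

variable {F : Type*} [Field F]

theorem _root_.Subgroup.mem_iff_pow_natCard_eq_one (T : Subgroup Fˣ) [Finite T] {x : Fˣ} :
    x ∈ T ↔ x ^ Nat.card T = 1 := by
  have hle : T ≤ rootsOfUnity (Nat.card T) F := fun w hw =>
    (mem_rootsOfUnity _ _).2 (congrArg Subtype.val (pow_card_eq_one' (G := T) (x := ⟨w, hw⟩)))
  exact (SetLike.ext_iff.1 (Subgroup.eq_of_le_of_card_ge hle (card_rootsOfUnity F _)) x).trans
    (mem_rootsOfUnity _ _)

theorem _root_.Subgroup.val_pow_natCard_eq_one (T : Subgroup Fˣ) [Finite T] (w : T) :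
    ((w : Fˣ) : F) ^ Nat.card T = 1 := by
  rw [← Units.val_pow_eq_pow_val, T.mem_iff_pow_natCard_eq_one.1 w.2, Units.val_one]

theorem _root_.Subgroup.exists_units_val_eq_of_pow_natCard_eq_one (T : Subgroup Fˣ) [Finite T]
    {x : F} (hx : x ^ Nat.card T = 1) : ∃ w : T, ((w : Fˣ) : F) = x := by
  have hx0 : x ≠ 0 := by
    rintro rfl
    exact zero_ne_one ((zero_pow Nat.card_pos.ne').symm.trans hx)
  have hmem : Units.mk0 x hx0 ∈ T := T.mem_iff_pow_natCard_eq_one.2 (Units.ext (by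
    rw [Units.val_pow_eq_pow_val, Units.val_mk0, hx, Units.val_one]))
  exact ⟨⟨_, hmem⟩, rfl⟩

theorem _root_.Subgroup.prod_units_val_eq_prod_nthRootsFinset (T : Subgroup Fˣ) [Fintype T]
    {C : Type*} [CommMonoid C] (f : F → C) :
    ∏ w : T, f ((w : Fˣ) : F) = ∏ x ∈ Polynomial.nthRootsFinset (Nat.card T) (1 : F), f x := by
  refine Finset.prod_nbij (fun w : T => ((w : Fˣ) : F))
    (fun w _ => (Polynomial.mem_nthRootsFinset Nat.card_pos 1).2 (T.val_pow_natCard_eq_one w))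
    (fun a _ b _ h => Subtype.ext (Units.ext h)) (fun x hx => ?_) (fun _ _ => rfl)
  obtain ⟨w, hw⟩ := T.exists_units_val_eq_of_pow_natCard_eq_one
    ((Polynomial.mem_nthRootsFinset Nat.card_pos 1).1 hx)
  exact ⟨w, Finset.mem_coe.2 (Finset.mem_univ _), hw⟩

theorem _root_.Subgroup.prod_one_sub_mul_units_val (T : Subgroup Fˣ) [Fintype T] (c : F) :
    ∏ w : T, (1 - c * ((w : Fˣ) : F)) = 1 - c ^ Nat.card T := by
  obtain ⟨ω, hω⟩ := IsCyclic.exists_ofOrder_eq_natCard (α := T)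
  have hprim : IsPrimitiveRoot ((ω : Fˣ) : F) (Nat.card T) := by
    rw [← hω, ← Subgroup.orderOf_coe, ← orderOf_units]
    exact IsPrimitiveRoot.orderOf _
  rw [T.prod_units_val_eq_prod_nthRootsFinset (fun x => 1 - c * x)]
  simpa only [one_pow, mul_comm] using (hprim.pow_sub_pow_eq_prod_sub_mul 1 c Nat.card_pos).symm

theorem eta_one (k : ℕ) : eta k (1 : F) = 1 := if_pos rfl

theorem eta_mul_one_sub (k : ℕ) (x : F) : eta k x * (1 - x) = 1 - x ^ k := by
  rcases eq_or_ne x 1 with rfl | hx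
  · simp
  · rw [eta, if_neg hx, div_mul_cancel₀ _ (sub_ne_zero.2 hx.symm)]

theorem prod_eta_units_val_eq_one (T : Subgroup Fˣ) [Fintype T] {k : ℕ}
    (hk : k.Coprime (Nat.card T)) : ∏ w : T, eta k ((w : Fˣ) : F) = 1 := by
  -- on `T`, `η_k w = φ (w ^ k) / φ w` with `φ` nowhere zero, and `w ↦ w ^ k` permutes `T`
  set φ : F → F := fun x => if x = 1 then 1 else 1 - x
  have hφ : ∀ x, φ x ≠ 0 := fun x => by
    by_cases hx : x = 1
    · simp [φ, hx]
    · simpa [φ, hx, sub_eq_zero] using Ne.symm hx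
  have hpow : ∀ w : T, eta k ((w : Fˣ) : F) * φ ((w : Fˣ) : F) = φ (((w : Fˣ) : F) ^ k) :=
      fun w => by
    by_cases hw : ((w : Fˣ) : F) = 1
    · simp [φ, hw, eta_one]
    · have hwk : ((w : Fˣ) : F) ^ k ≠ 1 := fun h => hw <| by
        have h1 := pow_gcd_eq_one.2 ⟨h, T.val_pow_natCard_eq_one w⟩
        rwa [hk.gcd_eq_one, pow_one] at h1
      simp only [φ, if_neg hw, if_neg hwk, eta_mul_one_sub]
  have hperm : ∏ w : T, φ (((w : Fˣ) : F) ^ k) = ∏ w : T, φ ((w : Fˣ) : F) :=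
    Fintype.prod_equiv (powCoprime hk.symm) _ _ fun w => by simp
  have hne : ∏ w : T, φ ((w : Fˣ) : F) ≠ 0 := Finset.prod_ne_zero_iff.2 fun w _ => hφ _
  refine mul_right_cancel₀ hne ?_
  rw [← Finset.prod_mul_distrib, Finset.prod_congr rfl fun w _ => hpow w, hperm, one_mul]

theorem prod_eta_mul_units_val_of_pow_ne_one (T : Subgroup Fˣ) [Fintype T] {k : ℕ}
    (hk : k.Coprime (Nat.card T)) {ζ : F} (hζ : ζ ^ Nat.card T ≠ 1) :
    ∏ w : T, eta k (ζ * (w : Fˣ)) = eta k (ζ ^ Nat.card T) := by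
  have hden : 1 - ζ ^ Nat.card T ≠ 0 := sub_ne_zero.2 (Ne.symm hζ)
  have hnum : ∏ w : T, (1 - (ζ * (w : Fˣ)) ^ k) = 1 - (ζ ^ Nat.card T) ^ k := by
    rw [← pow_mul, mul_comm, pow_mul, ← T.prod_one_sub_mul_units_val]
    exact Fintype.prod_equiv (powCoprime hk.symm) _ _ fun w => by simp [mul_pow]
  refine mul_right_cancel₀ hden ?_
  rw [eta_mul_one_sub, ← T.prod_one_sub_mul_units_val, ← Finset.prod_mul_distrib]
  simpa only [eta_mul_one_sub] using hnum

theorem prod_eta_mul_units_val (T : Subgroup Fˣ) [Fintype T] {k : ℕ}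
    (hk : k.Coprime (Nat.card T)) (ζ : F) :
    ∏ w : T, eta k (ζ * (w : Fˣ)) = eta k (ζ ^ Nat.card T) := by
  by_cases hζ : ζ ^ Nat.card T = 1
  · obtain ⟨w₀, rfl⟩ := T.exists_units_val_eq_of_pow_natCard_eq_one hζ
    rw [hζ, eta_one, ← prod_eta_units_val_eq_one T hk]
    exact Fintype.prod_equiv (Equiv.mulLeft w₀) _ _ fun w => by simp
  · exact prod_eta_mul_units_val_of_pow_ne_one T hk hζ

theorem map_bassUnit {R S Fn : Type*} [Ring R] [Ring S] [FunLike Fn R S] [RingHomClass Fn R S]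
    (f : Fn) (x : R) (n k m : ℕ) : f (bassUnit x n k m) = bassUnit (f x) n k m := by
  simp only [bassUnit, map_add, map_pow, map_sum, map_zsmul]

theorem bassUnit_eq_eta_pow {x : F} {n k m : ℕ} (hx : x ^ n = 1) (hkm : k ^ m ≡ 1 [MOD n]) :
    bassUnit x n k m = eta k x ^ m := by
  rcases eq_or_ne x 1 with rfl | hx1
  · have hdvd : (n : ℤ) ∣ 1 - (k : ℤ) ^ m := by exact_mod_cast Nat.modEq_iff_dvd.1 hkm
    have hcancel : (((1 - (k : ℤ) ^ m) / n : ℤ) : F) * n = 1 - (k : F) ^ m := by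
      exact_mod_cast congrArg (Int.cast : ℤ → F) (Int.ediv_mul_cancel hdvd)
    simp only [bassUnit, one_pow, Finset.sum_const, Finset.card_range, nsmul_eq_mul, mul_one,
      zsmul_eq_mul, hcancel, eta_one]
    ring
  · have hsum : ∑ i ∈ Finset.range n, x ^ i = 0 := by
      rw [geom_sum_eq hx1, hx, sub_self, zero_div]
    rw [bassUnit, hsum, smul_zero, add_zero, geom_sum_eq hx1, eta, if_neg hx1,
      ← neg_div_neg_eq, neg_sub, neg_sub]

theorem map_hatQ_eq_one {A : Type*} [Ring A] [Algebra ℚ A] [Finite G]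
    (ρ : MonoidAlgebra ℚ G →ₐ[ℚ] A) {K : Subgroup G}
    (hK : ∀ u ∈ K, ρ (MonoidAlgebra.of ℚ G u) = 1) : ρ (hatQ K) = 1 := by
  have hcard : (Nat.card K : ℚ) ≠ 0 := Nat.cast_ne_zero.2 Nat.card_pos.ne'
  rw [hatQ, map_smul, map_sum,
    Finset.sum_congr rfl fun x hx => hK x ((Set.Finite.mem_toFinset _).1 hx), Finset.sum_const,
    ← Nat.card_eq_card_finite_toFinset, ← Nat.cast_smul_eq_nsmul ℚ, smul_smul,
    show Nat.card (K : Set G) = Nat.card K from rfl, inv_mul_cancel₀ hcard, one_smul]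

theorem map_bassUnit_hatQ [Finite G] [Algebra ℚ F] (ρ : MonoidAlgebra ℚ G →ₐ[ℚ] F)
    {K : Subgroup G} (hK : ∀ u ∈ K, ρ (MonoidAlgebra.of ℚ G u) = 1) (x : G) {k m : ℕ}
    (hkm : k ^ m ≡ 1 [MOD orderOf x]) :
    ρ (bassUnit (MonoidAlgebra.of ℚ G x * hatQ K + 1 - hatQ K) (orderOf x) k m) =
      eta k (ρ (MonoidAlgebra.of ℚ G x)) ^ m := by
  have hx : ρ (MonoidAlgebra.of ℚ G x * hatQ K + 1 - hatQ K) = ρ (MonoidAlgebra.of ℚ G x) := by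
    rw [map_sub, map_add, map_mul, map_hatQ_eq_one ρ hK, map_one, mul_one, add_sub_cancel_right]
  rw [map_bassUnit, hx]
  refine bassUnit_eq_eta_pow ?_ hkm
  rw [← map_pow, ← map_pow, pow_orderOf_eq_one, map_one, map_one]

end Field

theorem statement3_general {H : Type*} [Group H] [Fintype H]
    (K : Subgroup H) (g : H)
    (L : Subgroup H) (hKL : K ≤ L)
    {F : Type*} [Field F] [Algebra ℚ F]
    (ρ : MonoidAlgebra ℚ H →ₐ[ℚ] F)
    (hρL : ∀ u ∈ L, ρ (MonoidAlgebra.of ℚ H u) = 1)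
    (hρg : IsPrimitiveRoot (ρ (MonoidAlgebra.of ℚ H g)) L.index)
    (M : Subgroup H)
    (k m nHK : ℕ)
    (hkt : Nat.gcd k ((L ⊓ M).relIndex M) = 1)
    (hkm : ∀ u ∈ M, k ^ m ≡ 1 [MOD orderOf (g * u)]) :
    (∏ u ∈ ((M : Set H)).toFinite.toFinset,
        ρ (bassUnit (MonoidAlgebra.of ℚ H (g * u) * hatQ K + 1 - hatQ K)
          (orderOf (g * u)) k (m * nHK))) =
      eta k (ρ (MonoidAlgebra.of ℚ H g) ^ ((L ⊓ M).relIndex M)) ^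
        (Nat.card ↥(L ⊓ M) * m * nHK) := by
  set χ : H →* Fˣ := ((MonoidAlgebra.lift ℚ F H).symm ρ).toHomUnits
  have hχ : ∀ x, (χ x : F) = ρ (MonoidAlgebra.of ℚ H x) := fun x => rfl
  have hker : χ.ker = L := χ.ker_eq_of_le_of_orderOf_eq_index
    (fun u hu => Units.ext (hρL u hu)) (by rw [← orderOf_units, hχ, hρg.eq_orderOf])
  set ψ := χ.domRestrict M
  have hrange : Nat.card ψ.range = (L ⊓ M).relIndex M := by
    rw [χ.natCard_range_domRestrict, hker, Subgroup.inf_relIndex_right]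
  have hfactor : ∀ u : M, ρ (bassUnit (MonoidAlgebra.of ℚ H (g * u) * hatQ K + 1 - hatQ K)
      (orderOf (g * u)) k (m * nHK)) = eta k ((χ g : F) * (ψ u : F)) ^ (m * nHK) := fun u => by
    rw [map_bassUnit_hatQ ρ (fun v hv => hρL v (hKL hv)), ← hχ, map_mul, Units.val_mul]
    · rfl
    · simpa [pow_mul] using (hkm u u.2).pow nHK
  rw [Finset.prod_subtype _ (p := (· ∈ M)) fun x => Set.Finite.mem_toFinset _,
    Finset.prod_congr rfl fun u _ => hfactor u,
    ψ.prod_comp_eq_prod_range_pow (fun w => eta k ((χ g : F) * w) ^ (m * nHK)),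
    Finset.prod_pow, prod_eta_mul_units_val ψ.range (hrange ▸ hkt), hrange,
    χ.natCard_ker_domRestrict, hker, hχ, ← pow_mul]
  ring_nf

/-- The projection of a product of generalized Bass units to a
power of a cyclotomic unit under a linear character of `H` with kernel `L`. -/
theorem statement3 {H : Type*} [Group H] [Fintype H]
    (K : Subgroup H) [K.Normal] (g : H)
    (hgen : ∀ y : H, ∃ z : ℤ, y⁻¹ * g ^ z ∈ K)
    (L : Subgroup H) (hKL : K ≤ L)
    {F : Type*} [Field F] [Algebra ℚ F]
    (ρ : MonoidAlgebra ℚ H →ₐ[ℚ] F)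
    (hρL : ∀ u ∈ L, ρ (MonoidAlgebra.of ℚ H u) = 1)
    (hρg : IsPrimitiveRoot (ρ (MonoidAlgebra.of ℚ H g)) L.index)
    (M : Subgroup H)
    (k m nHK : ℕ) (hk : 0 < k) (hm : 0 < m)
    (hnHK : IsLeast {ν | IsBassExpBound ⊤ K ν} nHK)
    (hkt : Nat.gcd k ((L ⊓ M).relIndex M) = 1)
    (hkm : ∀ u ∈ M, k ^ m ≡ 1 [MOD orderOf (g * u)]) :
    (∏ u ∈ ((M : Set H)).toFinite.toFinset,
        ρ (bassUnit (MonoidAlgebra.of ℚ H (g * u) * hatQ K + 1 - hatQ K)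
          (orderOf (g * u)) k (m * nHK))) =
      eta k (ρ (MonoidAlgebra.of ℚ H g) ^ ((L ⊓ M).relIndex M)) ^
        (Nat.card ↥(L ⊓ M) * m * nHK) :=
  statement3_general K g L hKL ρ hρL hρg M k m nHK hkt hkm

end

end ArXiv12091269
end

section
/- Let F be a field of characteristic zero and n ≥ 1. Let P, A ∈ M_n(F) be defined by: all entries of the first row and the first column of P equal 1, P_{ii} = −1 for 2 ≤ i ≤ n, and all other entries of P are 0; A is the permutation matrix with A_{i+1,i} = 1 for 1 ≤ i ≤ n−1, A_{1,n} = 1, and all other entries 0. Then P is invertible, (1/n)·J = P·E_{11}·P^{−1}, where J ∈ M_n(F) is the all-ones matrix and E_{11} the matrix unit with 1 in position (1,1) and 0 elsewhere, and, setting y = P·A·P^{−1}, the n matrices y^i·((1/n)J)·y^{−i} for 0 ≤ i ≤ n−1 form a complete set of orthogonal primitive idempotents of M_n(F): they are pairwise orthogonal idempotents, each is primitive, and their sum is the identity matrix. -/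
/- Common definitions for formalizing "Group rings of finite strongly monomial
groups: central units and primitive idempotents" (arXiv:1209.1269). -/

open scoped BigOperators

namespace ArXiv12091269

open scoped Classical

noncomputable section

variable {G : Type*} [Group G]

/-! The columns of `P` are the all-ones vector, spanning the image of `J`, and the vectors
`e₁ - eⱼ`, spanning its kernel; hence `P` diagonalises `(1/n) J` to `E₁₁`. The cyclic
permutation matrix `A` conjugates each `Eⱼⱼ` to `Eⱼ₊₁,ⱼ₊₁`, so conjugation by `P` carries
`Aⁱ E₁₁ A⁻ⁱ = E_{i+1,i+1}` to the `i`-th matrix of the family. The diagonal matrix units form a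
complete set of orthogonal idempotents, each primitive because `Eⱼⱼ M Eⱼⱼ` is a copy of the
field; all of this is preserved by the ring automorphism `x ↦ P x P⁻¹`. -/

open Matrix Fin.NatCast

theorem IsPrimIdemInCorner.map {R S : Type*} [Ring R] [Ring S] (φ : R ≃+* S) {e f : R}
    (h : IsPrimIdemInCorner e f) : IsPrimIdemInCorner (φ e) (φ f) := by
  obtain ⟨hf0, hff, hfe, hef, hprim⟩ := h
  refine ⟨by simpa using hf0, by rw [← map_mul, hff], by rw [← map_mul, hfe],
    by rw [← map_mul, hef], fun f₁ f₂ h₁e he₁ h₂e he₂ h₁₁ h₂₂ h₁₂ h₂₁ hsum => ?_⟩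
  have hsymm : ∀ x y z : S, x * y = z → φ.symm x * φ.symm y = φ.symm z := fun x y z h => by
    rw [← map_mul, h]
  have hfsum : f = φ.symm f₁ + φ.symm f₂ := by rw [← map_add, ← hsum, φ.symm_apply_apply]
  simpa using hprim (φ.symm f₁) (φ.symm f₂)
    (by simpa using hsymm _ _ _ h₁e) (by simpa using hsymm _ _ _ he₁)
    (by simpa using hsymm _ _ _ h₂e) (by simpa using hsymm _ _ _ he₂)
    (hsymm _ _ _ h₁₁) (hsymm _ _ _ h₂₂)
    (by simpa using hsymm _ _ _ h₁₂) (by simpa using hsymm _ _ _ h₂₁) hfsum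

theorem isPrimIdemInCorner_one_of_forall_idem {R : Type*} [Ring R] {f : R} (hf0 : f ≠ 0)
    (hf : f * f = f) (h : ∀ g : R, g * g = g → f * g = g → g * f = g → g = 0 ∨ g = f) :
    IsPrimIdemInCorner 1 f := by
  refine ⟨hf0, hf, mul_one f, one_mul f, fun f₁ f₂ _ _ _ _ h₁ _ h₁₂ h₂₁ hsum => ?_⟩
  have hff₁ : f * f₁ = f₁ := by rw [hsum, add_mul, h₁, h₂₁, add_zero]
  have hf₁f : f₁ * f = f₁ := by rw [hsum, mul_add, h₁, h₁₂, add_zero]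
  refine (h f₁ h₁ hff₁ hf₁f).imp id fun hf₁ => ?_
  rwa [hf₁, left_eq_add] at hsum

abbrev unitConj {R : Type*} [Semiring R] (u : Rˣ) : R ≃+* R :=
  MulSemiringAction.toRingEquiv (ConjAct Rˣ) R (ConjAct.toConjAct u)

theorem unitConj_apply {R : Type*} [Semiring R] (u : Rˣ) (x : R) :
    unitConj u x = u * x * ↑u⁻¹ :=
  rfl

theorem Units.pow_mul_mul_inv_pow_of_mul_eq {M ι : Type*} [Monoid M] [AddMonoidWithOne ι]
    (u : Mˣ) (e : ι → M) (h : ∀ c, (u : M) * e c = e (c + 1) * u) (i : ℕ) :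
    (u : M) ^ i * e 0 * (↑u⁻¹ : M) ^ i = e i := by
  have hpow : ∀ i : ℕ, (u : M) ^ i * e 0 = e i * (u : M) ^ i := by
    intro i
    induction i with
    | zero => simp
    | succ k ih =>
      rw [pow_succ', mul_assoc, ih, ← mul_assoc, h, Nat.cast_succ, mul_assoc, ← pow_succ']
  rw [hpow, mul_assoc, ← Units.val_pow_eq_pow_val, ← Units.val_pow_eq_pow_val, ← Units.val_mul,
    inv_pow, mul_inv_cancel, Units.val_one, mul_one]

section single

variable {ι R : Type*} [Fintype ι] [DecidableEq ι]

theorem completeOrthogonalIdempotents_single [Semiring R] :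
    CompleteOrthogonalIdempotents fun c : ι => single c c (1 : R) :=
  ⟨⟨fun c => by simp [IsIdempotentElem], fun _ _ hcd => single_mul_single_of_ne 1 _ _ _ hcd 1⟩,
    sum_single_one⟩

theorem isPrimIdemInCorner_single [Ring R] [IsDomain R] (c : ι) :
    IsPrimIdemInCorner 1 (single c c (1 : R)) := by
  refine isPrimIdemInCorner_one_of_forall_idem
    (fun h => one_ne_zero (α := R) (by simpa using congr_fun (congr_fun h c) c)) (by simp)
    fun g hg hl hr => ?_
  have hgc : g = single c c (g c c) := by
    calc g = single c c 1 * g * single c c 1 := by rw [hl, hr]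
      _ = single c c (g c c) := by simp
  have hidem : g c c * g c c = g c c := by
    have hcc := congr_fun (congr_fun hg c) c
    rw [hgc] at hcc
    simpa using hcc
  rcases IsIdempotentElem.iff_eq_zero_or_one.1 hidem with h | h
  · left; rw [hgc, h, single_zero]
  · right; rw [hgc, h]

end single

section cyclic

variable {R : Type*} {m : ℕ}

theorem permMatrix_finRotate_inv_apply [Zero R] [One R] (i j : Fin (m + 1)) :
    (finRotate (m + 1))⁻¹.permMatrix R i j = if i = j + 1 then 1 else 0 := by
  simp [PEquiv.toMatrix_apply, sub_eq_iff_eq_add]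

theorem permMatrix_finRotate_inv_mul_single [Semiring R] (c : Fin (m + 1)) :
    (finRotate (m + 1))⁻¹.permMatrix R * single c c 1 =
      single (c + 1) (c + 1) 1 * (finRotate (m + 1))⁻¹.permMatrix R := by
  ext a b
  simp [PEquiv.toMatrix_toPEquiv_mul, PEquiv.mul_toMatrix_toPEquiv, single_apply,
    eq_sub_iff_add_eq, Equiv.Perm.inv_def, finRotate_apply]

theorem isUnit_permMatrix_finRotate_inv [Semiring R] :
    IsUnit ((finRotate (m + 1))⁻¹.permMatrix R) :=
  (Group.isUnit (finRotate (m + 1))).map (permMatrixHom (R := R))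

end cyclic

section onesDiagonalizer

variable (K : Type*) [Field K] (m : ℕ)

def onesDiagonalizer : Matrix (Fin (m + 1)) (Fin (m + 1)) K :=
  of fun i j => if i = 0 then 1 else if j = 0 then 1 else if i = j then -1 else 0

def onesDiagonalizerInv : Matrix (Fin (m + 1)) (Fin (m + 1)) K :=
  of fun i j => ((m + 1 : ℕ) : K)⁻¹ - if i = j ∧ i ≠ 0 then 1 else 0

variable {K m}

theorem onesDiagonalizer_mul_onesDiagonalizerInv (hm : ((m + 1 : ℕ) : K) ≠ 0) :
    onesDiagonalizer K m * onesDiagonalizerInv K m = 1 := by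
  ext i j
  rw [mul_apply, Fin.sum_univ_succ]
  induction i using Fin.cases <;> induction j using Fin.cases <;>
    simp [onesDiagonalizer, onesDiagonalizerInv, one_apply, Fin.succ_ne_zero,
      (Fin.succ_ne_zero _).symm, Finset.sum_sub_distrib, ite_and]
  all_goals push_cast at hm; field_simp; ring

def onesDiagonalizerUnit (hm : ((m + 1 : ℕ) : K) ≠ 0) : (Matrix (Fin (m + 1)) (Fin (m + 1)) K)ˣ :=
  ⟨onesDiagonalizer K m, onesDiagonalizerInv K m, onesDiagonalizer_mul_onesDiagonalizerInv hm,
    mul_eq_one_comm.1 (onesDiagonalizer_mul_onesDiagonalizerInv hm)⟩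

theorem inv_onesDiagonalizer (hm : ((m + 1 : ℕ) : K) ≠ 0) :
    (onesDiagonalizer K m)⁻¹ = ↑(onesDiagonalizerUnit hm)⁻¹ :=
  inv_eq_right_inv (onesDiagonalizer_mul_onesDiagonalizerInv hm)

theorem onesDiagonalizer_mul_single_mul_onesDiagonalizerInv :
    onesDiagonalizer K m * single 0 0 1 * onesDiagonalizerInv K m =
      ((m + 1 : ℕ) : K)⁻¹ • of fun _ _ => 1 := by
  ext i j
  simp [onesDiagonalizer, onesDiagonalizerInv, mul_apply, Fin.sum_univ_succ, single_apply,
    (Fin.succ_ne_zero _).symm]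

end onesDiagonalizer

theorem Fin.eq_add_one_iff_val {m : ℕ} (i j : Fin (m + 1)) :
    i = j + 1 ↔ (i : ℕ) = j + 1 ∨ ((i : ℕ) = 0 ∧ (j : ℕ) = m) := by
  rw [Fin.ext_iff, Fin.val_add_one]
  split_ifs with h <;> simp only [Fin.ext_iff, Fin.val_last] at h <;> omega

theorem conjugate_pow_eq_unitConj_single {K : Type*} [Field K] {m : ℕ}
    (hm : ((m + 1 : ℕ) : K) ≠ 0) (i : ℕ) :
    (onesDiagonalizer K m * (finRotate (m + 1))⁻¹.permMatrix K * (onesDiagonalizer K m)⁻¹) ^ i *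
        (((m + 1 : ℕ) : K)⁻¹ • of fun _ _ => 1) *
        (onesDiagonalizer K m * (finRotate (m + 1))⁻¹.permMatrix K *
          (onesDiagonalizer K m)⁻¹)⁻¹ ^ i =
      unitConj (onesDiagonalizerUnit hm) (single (i : Fin (m + 1)) i 1) := by
  obtain ⟨a, ha⟩ := isUnit_permMatrix_finRotate_inv (R := K) (m := m)
  set p := onesDiagonalizerUnit hm
  have hy : onesDiagonalizer K m * (finRotate (m + 1))⁻¹.permMatrix K *
      (onesDiagonalizer K m)⁻¹ = unitConj p a := by
    rw [inv_onesDiagonalizer hm, unitConj_apply, ha]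
    rfl
  have hyinv : (unitConj p a)⁻¹ = unitConj p ↑a⁻¹ :=
    inv_eq_right_inv (by rw [← map_mul, a.mul_inv, map_one])
  have hJ : ((m + 1 : ℕ) : K)⁻¹ • (of fun _ _ => 1 : Matrix (Fin (m + 1)) (Fin (m + 1)) K) =
      unitConj p (single 0 0 1) := by
    rw [unitConj_apply, ← onesDiagonalizer_mul_single_mul_onesDiagonalizerInv]
    rfl
  have hshift : ∀ c : Fin (m + 1), (a : Matrix (Fin (m + 1)) (Fin (m + 1)) K) * single c c 1 =
      single (c + 1) (c + 1) 1 * (a : Matrix (Fin (m + 1)) (Fin (m + 1)) K) := by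
    rw [ha]
    exact permMatrix_finRotate_inv_mul_single
  rw [hy, hyinv, hJ, ← map_pow, ← map_pow, ← map_mul, ← map_mul,
    Units.pow_mul_mul_inv_pow_of_mul_eq a (fun c => single c c 1) hshift i]

/-- The explicit complete set of orthogonal primitive
idempotents `y^i ((1/n)J) y^(-i)`, `y = P A P⁻¹`, of `M_n(F)`. -/
theorem statement8 {F : Type*} [Field F] [CharZero F] (n : ℕ) (hn : 1 ≤ n)
    (P A : Matrix (Fin n) (Fin n) F)
    (hP : P = Matrix.of fun (i j : Fin n) =>
      if i = (⟨0, hn⟩ : Fin n) then 1 else if j = (⟨0, hn⟩ : Fin n) then 1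
      else if i = j then -1 else 0)
    (hA : A = Matrix.of fun (i j : Fin n) =>
      if (i : ℕ) = (j : ℕ) + 1 ∨ ((i : ℕ) = 0 ∧ (j : ℕ) = n - 1) then 1 else 0) :
    IsUnit P ∧
    (n : F)⁻¹ • (Matrix.of fun _ _ => (1 : F)) =
      P * Matrix.single (⟨0, hn⟩ : Fin n) (⟨0, hn⟩ : Fin n) 1 * P⁻¹ ∧
    (∀ i j : ℕ, i < n → j < n → i ≠ j →
      ((P * A * P⁻¹) ^ i * ((n : F)⁻¹ • Matrix.of fun _ _ => (1 : F)) *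
          ((P * A * P⁻¹)⁻¹) ^ i) *
        ((P * A * P⁻¹) ^ j * ((n : F)⁻¹ • Matrix.of fun _ _ => (1 : F)) *
          ((P * A * P⁻¹)⁻¹) ^ j) = 0) ∧
    (∀ i : ℕ, i < n → IsPrimIdemInCorner 1
      ((P * A * P⁻¹) ^ i * ((n : F)⁻¹ • Matrix.of fun _ _ => (1 : F)) *
        ((P * A * P⁻¹)⁻¹) ^ i)) ∧
    (∑ i ∈ Finset.range n,
      (P * A * P⁻¹) ^ i * ((n : F)⁻¹ • Matrix.of fun _ _ => (1 : F)) *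
        ((P * A * P⁻¹)⁻¹) ^ i) = 1 := by
  obtain ⟨m, rfl⟩ : ∃ m, n = m + 1 := ⟨n - 1, by omega⟩
  have hm : ((m + 1 : ℕ) : F) ≠ 0 := Nat.cast_ne_zero.2 m.succ_ne_zero
  have hP' : P = onesDiagonalizer F m := hP
  have hA' : A = (finRotate (m + 1))⁻¹.permMatrix F := by
    ext i j
    simp only [hA, permMatrix_finRotate_inv_apply, of_apply, Nat.add_sub_cancel,
      Fin.eq_add_one_iff_val]
  subst hP' hA'
  set p := onesDiagonalizerUnit hm
  have he := completeOrthogonalIdempotents_single.map (unitConj p).toRingHom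
  refine ⟨p.isUnit, ?_, fun i j hi hj hij => ?_, fun i _ => ?_, ?_⟩
  · rw [inv_onesDiagonalizer hm, ← onesDiagonalizer_mul_single_mul_onesDiagonalizerInv]
    rfl
  · rw [conjugate_pow_eq_unitConj_single hm, conjugate_pow_eq_unitConj_single hm]
    exact he.ortho fun h => hij (by simpa [Nat.mod_eq_of_lt, hi, hj] using congr_arg Fin.val h)
  · rw [conjugate_pow_eq_unitConj_single hm]
    simpa using (isPrimIdemInCorner_single _).map (unitConj p)
  · simp_rw [conjugate_pow_eq_unitConj_single hm]
    rw [← Fin.sum_univ_eq_sum_range fun i => unitConj p (single (i : Fin (m + 1)) i 1)]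
    simpa using he.complete

end

end ArXiv12091269
end

section
/- Let G = C_{q^m} ⋊ C_{p^n} be as described and let L_i = ⟨a, b^{p^i}⟩ for 0 ≤ i ≤ n. Then ε(G, L_i) is a central idempotent of ℚG and the component ℚG·ε(G, L_i) is isomorphic as a ℚ-algebra to the cyclotomic field ℚ(ζ_{p^i}). -/
/- Common definitions for formalizing "Group rings of finite strongly monomial
groups: central units and primitive idempotents" (arXiv:1209.1269). -/

open scoped BigOperators

namespace ArXiv12091269

open scoped Classical

noncomputable section

variable {G : Type*} [Group G]

/-! With `A = ⟨a⟩`, which is normal, `G = A ⋊ ⟨b⟩` and `L_i = A ⋊ ⟨b^(p^i)⟩` is normal with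
`G / L_i` cyclic of order `p^i`, generated by the image of `b`. For `i ≥ 1` every subgroup properly
containing `L_i` contains `L_(i-1)`, so `ε(G, L_i) = L̂_i - L̂_(i-1)`, and summing over the cosets
of `L_i` in `L_(i-1)` gives `Φ_(p^i)(b) L̂_i = p L̂_(i-1)`; for `i = 0`, `ε(G, L_0) = Ĝ`. Hence
`ε = ε(G, L_i)` is a central idempotent, fixed by `L_i` and killed by `Φ_(p^i)(b)`.
The character `G → G / L_i ≅ ⟨ζ_(p^i)⟩` extends to `φ : ℚG → ℚ(ζ_(p^i))` with `φ ε = 1`.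
It is onto, and it is injective on `ℚG ε`: every element there is `P(b) ε`, and
`φ (P(b) ε) = P(ζ_(p^i))` vanishes only if `Φ_(p^i) ∣ P`. -/

open Subgroup Polynomial

theorem zpowers_normal_of_conj_mem [Finite G] {a b : G} (hgen : closure {a, b} = ⊤)
    (hab : b⁻¹ * a * b ∈ zpowers a) : (zpowers a).Normal := by
  -- the monoid generated by `a` and `b` is all of the finite group `G`, so invariance of
  -- `⟨a⟩` under `x ↦ g⁻¹ x g` for `g = a, b` suffices
  let N : Submonoid G :=
    { carrier := {g | ∀ x ∈ zpowers a, g⁻¹ * x * g ∈ zpowers a}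
      one_mem' := by simp
      mul_mem' := fun {g h} hg hh x hx => by simpa [mul_assoc] using hh _ (hg x hx) }
  have hN : Submonoid.closure {a, b} ≤ N := by
    refine Submonoid.closure_le.mpr (Set.insert_subset_iff.mpr ⟨fun x hx => ?_,
      Set.singleton_subset_iff.mpr fun x hx => ?_⟩)
    · exact mul_mem (mul_mem (inv_mem (mem_zpowers _)) hx) (mem_zpowers _)
    · obtain ⟨z, rfl⟩ := mem_zpowers_iff.mp hx
      have := conj_zpow (a := b⁻¹) (b := a) (i := z)
      rw [inv_inv] at this
      exact this ▸ zpow_mem hab z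
  have hmem : ∀ g, g ∈ N := fun g => hN <| by
    rw [← closure_toSubmonoid_of_finite, hgen]
    trivial
  exact ⟨fun x hx g => by simpa using hmem g⁻¹ x hx⟩

theorem closure_pair_eq_sup_zpowers (x y : G) : closure {x, y} = zpowers x ⊔ zpowers y := by
  rw [← Set.singleton_union, Subgroup.closure_union, zpowers_eq_closure, zpowers_eq_closure]

theorem zpow_prime_pow_mem_of_not_dvd {M : Subgroup G} {x : G} {p j : ℕ} (hp : p.Prime) {t : ℤ}
    (hx : x ^ p ^ (j + 1) ∈ M) (ht : x ^ t ∈ M) (hnd : ¬ (p : ℤ) ^ (j + 1) ∣ t) :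
    x ^ p ^ j ∈ M := by
  obtain ⟨u, v, huv⟩ : ∃ u v : ℤ, ((p ^ j : ℕ) : ℤ) = t * u + (p : ℤ) ^ (j + 1) * v := by
    refine Int.gcd_dvd_iff.mp ?_
    have hdvd : Int.gcd t ((p : ℤ) ^ (j + 1)) ∣ p ^ (j + 1) := by
      simpa [Int.natAbs_pow] using Int.gcd_dvd_natAbs_right t ((p : ℤ) ^ (j + 1))
    obtain ⟨l, hl, hgcd⟩ := (Nat.dvd_prime_pow hp).mp hdvd
    rw [hgcd]
    refine pow_dvd_pow p (Nat.lt_succ_iff.mp (hl.lt_of_ne fun h => hnd ?_))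
    simpa [hgcd, h] using Int.gcd_dvd_left t ((p : ℤ) ^ (j + 1))
  rw [← zpow_natCast, huv, zpow_add, zpow_mul, zpow_mul]
  exact mul_mem (zpow_mem ht u) (zpow_mem (by exact_mod_cast hx) v)

theorem orderOf_mk_eq_of_forall_zpow_mem_iff {N : Subgroup G} [N.Normal] {c : G} {d : ℕ}
    (h : ∀ t : ℤ, c ^ t ∈ N ↔ (d : ℤ) ∣ t) : orderOf (c : G ⧸ N) = d := by
  have key : ∀ t : ℤ, (orderOf (c : G ⧸ N) : ℤ) ∣ t ↔ (d : ℤ) ∣ t := fun t => by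
    rw [orderOf_dvd_iff_zpow_eq_one, ← QuotientGroup.mk_zpow, QuotientGroup.eq_one_iff, h]
  exact Nat.dvd_antisymm (Int.natCast_dvd_natCast.mp ((key d).mpr dvd_rfl))
    (Int.natCast_dvd_natCast.mp ((key _).mp dvd_rfl))

theorem sum_range_orderOf_sum_eq_sum [Finite G] {K H : Subgroup G} [K.Normal] (hKH : K ≤ H)
    {c : G} (hc : c ∈ H) (hH : ∀ h ∈ H, (h : G ⧸ K) ∈ zpowers (c : G ⧸ K))
    {M : Type*} [AddCommMonoid M] (f : G → M) :
    ∑ k ∈ Finset.range (orderOf (c : G ⧸ K)), ∑ x ∈ (K : Set G).toFinite.toFinset, f (c ^ k * x) =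
      ∑ h ∈ (H : Set G).toFinite.toFinset, f h := by
  rw [← Finset.sum_product']
  refine Finset.sum_bij (fun z _ => c ^ z.1 * z.2) ?_ ?_ ?_ (fun _ _ => rfl)
  · rintro ⟨k, x⟩ hz
    simp only [Finset.mem_product, Finset.mem_range, Set.Finite.mem_toFinset,
      SetLike.mem_coe] at hz ⊢
    exact mul_mem (pow_mem hc k) (hKH hz.2)
  · rintro ⟨k, x⟩ hz ⟨k', x'⟩ hz' heq
    simp only [Finset.mem_product, Finset.mem_range, Set.Finite.mem_toFinset,
      SetLike.mem_coe] at hz hz'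
    have hk : k = k' := pow_injOn_Iio_orderOf hz.1 hz'.1 (by
      simpa [(QuotientGroup.eq_one_iff _).mpr hz.2, (QuotientGroup.eq_one_iff _).mpr hz'.2]
        using congrArg (fun g : G => (g : G ⧸ K)) heq)
    subst hk
    simpa using heq
  · intro h hh
    simp only [Set.Finite.mem_toFinset, SetLike.mem_coe] at hh
    obtain ⟨k, hk, hkh⟩ := Finset.mem_image.mp (mem_zpowers_iff_mem_range_orderOf.mp (hH h hh))
    refine ⟨(k, (c ^ k)⁻¹ * h), ?_, mul_inv_cancel_left _ _⟩
    simpa [Finset.mem_product] using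
      ⟨Finset.mem_range.mp hk, QuotientGroup.eq.mp (by simpa using hkh)⟩

section GroupAlgebra

theorem mem_center_of_forall_of_mul_comm {z : MonoidAlgebra ℚ G}
    (h : ∀ g : G, MonoidAlgebra.of ℚ G g * z = z * MonoidAlgebra.of ℚ G g) :
    z ∈ Subring.center (MonoidAlgebra ℚ G) := by
  rw [Subring.mem_center_iff]
  intro x
  induction x using MonoidAlgebra.induction_on with
  | of g => exact h g
  | add x y hx hy => rw [add_mul, mul_add, hx, hy]
  | smul c x hx => rw [smul_mul_assoc, mul_smul_comm, hx]

variable [Finite G]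

theorem card_toFinset_subgroup (S : Subgroup G) :
    (S : Set G).toFinite.toFinset.card = Nat.card S :=
  (Nat.card_eq_card_finite_toFinset _).symm

theorem of_mul_hatQ {S : Subgroup G} {g : G} (hg : g ∈ S) :
    MonoidAlgebra.of ℚ G g * hatQ S = hatQ S := by
  rw [hatQ, mul_smul_comm, Finset.mul_sum]
  congr 1
  refine Finset.sum_equiv (Equiv.mulLeft g) (fun x => ?_) (fun x _ => (map_mul _ _ _).symm)
  simp [S.mul_mem_cancel_left hg]

theorem hatQ_mul_of {S : Subgroup G} {g : G} (hg : g ∈ S) :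
    hatQ S * MonoidAlgebra.of ℚ G g = hatQ S := by
  rw [hatQ, smul_mul_assoc, Finset.sum_mul]
  congr 1
  refine Finset.sum_equiv (Equiv.mulRight g) (fun x => ?_) (fun x _ => (map_mul _ _ _).symm)
  simp [S.mul_mem_cancel_right hg]

theorem hatQ_mul_eq_of_forall {S : Subgroup G} {y : MonoidAlgebra ℚ G}
    (hy : ∀ g ∈ S, MonoidAlgebra.of ℚ G g * y = y) : hatQ S * y = y := by
  have hS : (Nat.card S : ℚ) ≠ 0 := Nat.cast_ne_zero.mpr Nat.card_pos.ne'
  rw [hatQ, smul_mul_assoc, Finset.sum_mul,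
    Finset.sum_congr rfl fun g hg => hy g (by simpa using hg),
    Finset.sum_const, card_toFinset_subgroup, ← Nat.cast_smul_eq_nsmul ℚ, smul_smul,
    inv_mul_cancel₀ hS, one_smul]

theorem mul_hatQ_eq_of_forall {S : Subgroup G} {y : MonoidAlgebra ℚ G}
    (hy : ∀ g ∈ S, y * MonoidAlgebra.of ℚ G g = y) : y * hatQ S = y := by
  have hS : (Nat.card S : ℚ) ≠ 0 := Nat.cast_ne_zero.mpr Nat.card_pos.ne'
  rw [hatQ, mul_smul_comm, Finset.mul_sum,
    Finset.sum_congr rfl fun g hg => hy g (by simpa using hg),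
    Finset.sum_const, card_toFinset_subgroup, ← Nat.cast_smul_eq_nsmul ℚ, smul_smul,
    inv_mul_cancel₀ hS, one_smul]

theorem hatQ_mul_hatQ_of_le {H K : Subgroup G} (h : H ≤ K) : hatQ H * hatQ K = hatQ K :=
  hatQ_mul_eq_of_forall fun _ hg => of_mul_hatQ (h hg)

theorem hatQ_mul_hatQ_of_ge {H K : Subgroup G} (h : H ≤ K) : hatQ K * hatQ H = hatQ K :=
  mul_hatQ_eq_of_forall fun _ hg => hatQ_mul_of (h hg)

theorem hatQ_mem_center {S : Subgroup G} [S.Normal] :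
    hatQ S ∈ Subring.center (MonoidAlgebra ℚ G) := by
  refine mem_center_of_forall_of_mul_comm fun g => ?_
  rw [hatQ, mul_smul_comm, smul_mul_assoc, Finset.mul_sum, Finset.sum_mul]
  congr 1
  refine Finset.sum_equiv (MulAut.conj g).toEquiv (fun x => ?_) (fun x _ => ?_)
  · simpa using ⟨fun hx => ‹S.Normal›.conj_mem x hx g,
      fun hx => by simpa [mul_assoc] using ‹S.Normal›.conj_mem' _ hx g⟩
  · simp [mul_assoc]

theorem map_hatQ_eq_one_s12 {K : Type*} [Semiring K] [Algebra ℚ K] (φ : MonoidAlgebra ℚ G →ₐ[ℚ] K)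
    {S : Subgroup G} (hφ : ∀ g ∈ S, φ (MonoidAlgebra.of ℚ G g) = 1) : φ (hatQ S) = 1 := by
  have hS : (Nat.card S : ℚ) ≠ 0 := Nat.cast_ne_zero.mpr Nat.card_pos.ne'
  rw [hatQ, map_smul, map_sum, Finset.sum_congr rfl fun g hg => hφ g (by simpa using hg),
    Finset.sum_const, card_toFinset_subgroup, ← Nat.cast_smul_eq_nsmul ℚ, smul_smul,
    inv_mul_cancel₀ hS, one_smul]

theorem sum_pow_of_mul_hatQ {K H : Subgroup G} [K.Normal] (hKH : K ≤ H) {c : G}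
    (hc : c ∈ H) (hH : ∀ h ∈ H, (h : G ⧸ K) ∈ zpowers (c : G ⧸ K)) :
    (∑ k ∈ Finset.range (orderOf (c : G ⧸ K)), MonoidAlgebra.of ℚ G c ^ k) * hatQ K =
      (orderOf (c : G ⧸ K) : ℚ) • hatQ H := by
  have hcard : Nat.card H = orderOf (c : G ⧸ K) * Nat.card K := by
    simpa [card_toFinset_subgroup] using
      (sum_range_orderOf_sum_eq_sum hKH hc hH (fun _ => (1 : ℕ))).symm
  have hd : (orderOf (c : G ⧸ K) : ℚ) ≠ 0 := Nat.cast_ne_zero.mpr (orderOf_pos _).ne'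
  rw [hatQ, hatQ, ← sum_range_orderOf_sum_eq_sum hKH hc hH, hcard, smul_smul, Nat.cast_mul,
    mul_inv, ← mul_assoc, mul_inv_cancel₀ hd, one_mul, mul_smul_comm, Finset.sum_mul]
  simp_rw [Finset.mul_sum, ← map_pow, ← map_mul]

theorem sum_pow_of_mul_hatQ_of_mem {S : Subgroup G} {c : G} (hc : c ∈ S) (d : ℕ) :
    (∑ k ∈ Finset.range d, MonoidAlgebra.of ℚ G c ^ k) * hatQ S = (d : ℚ) • hatQ S := by
  rw [Finset.sum_mul, Finset.sum_congr rfl fun k _ => by rw [← map_pow, of_mul_hatQ (pow_mem hc k)],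
    Finset.sum_const, Finset.card_range, Nat.cast_smul_eq_nsmul]

theorem of_mul_epsQ {H K : Subgroup G} {g : G} (hg : g ∈ K) :
    MonoidAlgebra.of ℚ G g * epsQ H K = epsQ H K := by
  unfold epsQ
  split_ifs with hKH
  · exact of_mul_hatQ (hKH ▸ hg)
  · rw [← mul_assoc, of_mul_hatQ hg]

theorem epsQ_eq_hatQ_sub_hatQ {H K M : Subgroup G} (hKM : K < M) (hMH : M ≤ H)
    (hM : ∀ h ∈ H, ∀ x ∈ M, h * x * h⁻¹ ∈ M)
    (hmin : ∀ M' : Subgroup G, M' ≤ H → K < M' →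
      (∀ h ∈ H, ∀ x ∈ M', h * x * h⁻¹ ∈ M') → M ≤ M') :
    epsQ H K = hatQ K - hatQ M := by
  have hmins : {M' | IsMinNormalAbove H K M'}.toFinite.toFinset = {M} := by
    ext M'
    simp only [Set.Finite.mem_toFinset, Set.mem_ofPred_eq, Finset.mem_singleton]
    constructor
    · rintro ⟨hM'H, hKM', hM'n, hM'min⟩
      exact (hM'min M hMH hKM hM (hmin M' hM'H hKM' hM'n)).symm
    · rintro rfl
      exact ⟨hMH, hKM, hM, fun M'' hM''H hKM'' hM''n hM''M =>
        le_antisymm hM''M (hmin M'' hM''H hKM'' hM''n)⟩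
  rw [epsQ, if_neg (hKM.trans_le hMH).ne, hmins, finProd, Finset.toList_singleton,
    List.map_singleton, List.prod_singleton, mul_sub, mul_one, hatQ_mul_hatQ_of_le hKM.le]

end GroupAlgebra

theorem nonempty_componentNUS_ringEquiv {R S : Type*} [Ring R] [Ring S] {e : R} (he : e * e = e)
    (f : R →+* S) (hf : Function.Surjective f) (hfe : f e = 1)
    (hker : ∀ x, x * e = x → f x = 0 → x = 0) :
    Nonempty (componentNUS e ≃+* S) := by
  refine ⟨RingEquiv.ofBijective (f.toNonUnitalRingHom.comp
    (NonUnitalSubringClass.subtype (componentNUS e))) ⟨?_, fun y => ?_⟩⟩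
  · refine (injective_iff_map_eq_zero _).mpr fun x hx => Subtype.ext (hker x x.2 hx)
  · obtain ⟨x, rfl⟩ := hf y
    refine ⟨⟨x * e, show x * e * e = x * e by rw [mul_assoc, he]⟩, ?_⟩
    change f (x * e) = f x
    rw [map_mul, hfe, mul_one]

theorem exists_aeval_mul_eq {k : Type*} [CommRing k] [Finite G] {N : Subgroup G} [N.Normal]
    {b : G} (hb : ∀ x : G ⧸ N, x ∈ zpowers (b : G ⧸ N)) {e : MonoidAlgebra k G}
    (hNe : ∀ l ∈ N, MonoidAlgebra.of k G l * e = e) (x : MonoidAlgebra k G) :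
    ∃ P : k[X], x * e = aeval (MonoidAlgebra.of k G b) P * e := by
  induction x using MonoidAlgebra.induction_on with
  | of g =>
    obtain ⟨n, hn⟩ := mem_powers_iff_mem_zpowers.mpr (hb g)
    have hl : (b ^ n)⁻¹ * g ∈ N := QuotientGroup.eq.mp (by simpa using hn)
    refine ⟨X ^ n, ?_⟩
    rw [map_pow, aeval_X, ← map_pow, ← mul_inv_cancel_left (b ^ n) g, map_mul, mul_assoc, hNe _ hl]
  | add x y hx hy =>
    obtain ⟨P, hP⟩ := hx
    obtain ⟨Q, hQ⟩ := hy
    exact ⟨P + Q, by rw [add_mul, hP, hQ, map_add, add_mul]⟩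
  | smul c x hx =>
    obtain ⟨P, hP⟩ := hx
    exact ⟨c • P, by rw [smul_mul_assoc, hP, map_smul, smul_mul_assoc]⟩

theorem aeval_cyclotomic_eq_zero {R K : Type*} [CommRing R] [CommRing K] [IsDomain K]
    [Algebra R K] {k : ℕ} (hk : 0 < k) {ζ : K} (hζ : IsPrimitiveRoot ζ k) :
    aeval ζ (cyclotomic k R) = 0 := by
  rw [← eval_map_algebraMap, map_cyclotomic]
  exact hζ.isRoot_cyclotomic hk

theorem nonempty_componentNUS_ringEquiv_of_isPrimitiveRoot [Finite G] {N : Subgroup G} [N.Normal]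
    {b : G} (hb : ∀ x : G ⧸ N, x ∈ zpowers (b : G ⧸ N)) {e : MonoidAlgebra ℚ G} (he : e * e = e)
    (hNe : ∀ l ∈ N, MonoidAlgebra.of ℚ G l * e = e) {k : ℕ} [NeZero k] {K : Type*} [Field K]
    [Algebra ℚ K] [IsCyclotomicExtension {k} ℚ K] (φ : MonoidAlgebra ℚ G →ₐ[ℚ] K)
    (hφb : IsPrimitiveRoot (φ (MonoidAlgebra.of ℚ G b)) k) (hφe : φ e = 1)
    (hcyc : aeval (MonoidAlgebra.of ℚ G b) (cyclotomic k ℚ) * e = 0) :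
    Nonempty (componentNUS e ≃+* K) := by
  refine nonempty_componentNUS_ringEquiv he φ.toRingHom ?_ hφe fun x hx hφx => ?_
  · refine (AlgHom.range_eq_top φ).mp (eq_top_iff.mpr ?_)
    rw [← IsCyclotomicExtension.adjoin_primitive_root_eq_top hφb]
    exact Algebra.adjoin_le (by simp)
  · obtain ⟨P, hP⟩ := exists_aeval_mul_eq hb hNe x
    have hroot : aeval (φ (MonoidAlgebra.of ℚ G b)) P = 0 := by
      rw [aeval_algHom_apply, ← mul_one (φ _), ← hφe, ← map_mul, ← hP, hx]
      exact hφx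
    have hminpoly : cyclotomic k ℚ = minpoly ℚ (φ (MonoidAlgebra.of ℚ G b)) := by
      refine minpoly.eq_of_irreducible_of_monic (cyclotomic.irreducible_rat (NeZero.pos k)) ?_
        (cyclotomic.monic k ℚ)
      exact aeval_cyclotomic_eq_zero (NeZero.pos k) hφb
    obtain ⟨Q, hQ⟩ : cyclotomic k ℚ ∣ P := hminpoly ▸ minpoly.dvd ℚ _ hroot
    rw [← hx, hP, hQ, mul_comm, map_mul, mul_assoc, hcyc, mul_zero]

theorem exists_algHom_of_forall_mem_zpowers [Finite G] {N : Subgroup G} [N.Normal] {b : G}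
    (hb : ∀ x : G ⧸ N, x ∈ zpowers (b : G ⧸ N)) {k K : Type*} [CommSemiring k] [Semiring K]
    [Algebra k K] {ζ : K} (hζ : ζ ^ orderOf (b : G ⧸ N) = 1) :
    ∃ φ : MonoidAlgebra k G →ₐ[k] K, φ (MonoidAlgebra.of k G b) = ζ ∧
      ∀ l ∈ N, φ (MonoidAlgebra.of k G l) = 1 := by
  have hζu : IsUnit ζ := IsUnit.of_pow_eq_one hζ (orderOf_pos _).ne'
  let χ : G ⧸ N →* Kˣ := monoidHomOfForallMemZpowers hb (g' := hζu.unit)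
    (orderOf_dvd_of_pow_eq_one (Units.ext (by simpa using hζ)))
  refine ⟨MonoidAlgebra.lift k K G ((Units.coeHom K).comp (χ.comp (QuotientGroup.mk' N))),
    ?_, fun l hl => ?_⟩
  · simp [χ]
  · simp [(QuotientGroup.eq_one_iff l).mpr hl]

theorem sup_zpowers_pow_succ_le (A : Subgroup G) (b : G) (p j : ℕ) :
    A ⊔ zpowers (b ^ p ^ (j + 1)) ≤ A ⊔ zpowers (b ^ p ^ j) :=
  sup_le_sup_left (zpowers_le.mpr (by rw [pow_succ, pow_mul]; exact pow_mem (mem_zpowers _) p)) A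

section SemidirectProduct

variable {A : Subgroup G} [A.Normal] {b : G}

theorem mk_mem_zpowers_of_mem_sup {N : Subgroup G} [N.Normal] (hAN : A ≤ N) {c h : G}
    (hh : h ∈ A ⊔ zpowers c) : (h : G ⧸ N) ∈ zpowers (c : G ⧸ N) := by
  obtain ⟨x, hx, y, hy, rfl⟩ := mem_sup_of_normal_left.mp hh
  obtain ⟨z, rfl⟩ := mem_zpowers_iff.mp hy
  rw [QuotientGroup.mk_mul, (QuotientGroup.eq_one_iff x).mpr (hAN hx), one_mul,
    QuotientGroup.mk_zpow]
  exact zpow_mem (mem_zpowers _) z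

theorem forall_mem_zpowers_mk (hAb : A ⊔ zpowers b = ⊤) {N : Subgroup G} [N.Normal]
    (hAN : A ≤ N) (x : G ⧸ N) : x ∈ zpowers (b : G ⧸ N) := by
  obtain ⟨g, rfl⟩ := QuotientGroup.mk_surjective x
  exact mk_mem_zpowers_of_mem_sup hAN (hAb ▸ mem_top g)

theorem normal_of_le (hAb : A ⊔ zpowers b = ⊤) {H : Subgroup G} (hAH : A ≤ H) : H.Normal := by
  have : IsCyclic (G ⧸ A) := ⟨⟨b, forall_mem_zpowers_mk hAb le_rfl⟩⟩
  exact Normal.of_commutator_le _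
    ((Normal.quotient_commutative_iff_commutator_le.mp inferInstance).trans hAH)

theorem zpow_mem_sup_zpowers_pow_iff (hdisj : Disjoint A (zpowers b)) {d : ℕ}
    (hd : d ∣ orderOf b) (t : ℤ) : b ^ t ∈ A ⊔ zpowers (b ^ d) ↔ (d : ℤ) ∣ t := by
  constructor
  · intro ht
    obtain ⟨x, hx, y, hy, hxy⟩ := mem_sup_of_normal_left.mp ht
    obtain ⟨z, rfl⟩ := mem_zpowers_iff.mp hy
    have hx1 : x = 1 := disjoint_def.mp hdisj hx <| by
      rw [eq_mul_inv_of_mul_eq hxy]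
      exact mul_mem (zpow_mem (mem_zpowers b) t) (inv_mem (zpow_mem (pow_mem (mem_zpowers b) d) z))
    rw [hx1, one_mul, ← zpow_natCast, ← zpow_mul, zpow_eq_zpow_iff_modEq] at hxy
    exact Int.modEq_zero_iff_dvd.mp
      ((hxy.of_dvd (Int.natCast_dvd_natCast.mpr hd)).symm.trans
        (Int.modEq_zero_iff_dvd.mpr (dvd_mul_right _ _)))
  · rintro ⟨u, rfl⟩
    rw [zpow_mul, zpow_natCast]
    exact mem_sup_right (zpow_mem (mem_zpowers _) u)

variable {p n : ℕ}

theorem sup_zpowers_pow_le_of_lt (hAb : A ⊔ zpowers b = ⊤) (hdisj : Disjoint A (zpowers b))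
    (hp : p.Prime) (hb : orderOf b = p ^ n) {j : ℕ} (hj : j + 1 ≤ n) {M : Subgroup G}
    (hM : A ⊔ zpowers (b ^ p ^ (j + 1)) < M) : A ⊔ zpowers (b ^ p ^ j) ≤ M := by
  obtain ⟨g, hgM, hgL⟩ := SetLike.exists_of_lt hM
  obtain ⟨x, hx, y, hy, rfl⟩ := mem_sup_of_normal_left.mp (hAb ▸ mem_top g : g ∈ A ⊔ zpowers b)
  obtain ⟨t, rfl⟩ := mem_zpowers_iff.mp hy
  have hAM : A ≤ M := le_sup_left.trans hM.le
  have htM : b ^ t ∈ M := (M.mul_mem_cancel_left (hAM hx)).mp hgM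
  have hnd : ¬ ((p ^ (j + 1) : ℕ) : ℤ) ∣ t := fun h => hgL <| mul_mem (mem_sup_left hx)
    ((zpow_mem_sup_zpowers_pow_iff hdisj (hb ▸ pow_dvd_pow p hj) t).mpr h)
  exact sup_le hAM (zpowers_le.mpr (zpow_prime_pow_mem_of_not_dvd hp
    (hM.le (mem_sup_right (mem_zpowers _))) htM (by exact_mod_cast hnd)))

variable [Finite G] (hAb : A ⊔ zpowers b = ⊤) (hdisj : Disjoint A (zpowers b)) (hp : p.Prime)
  (hb : orderOf b = p ^ n)
include hAb hdisj hp hb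

theorem aeval_cyclotomic_mul_hatQ_sup_zpowers {j : ℕ} (hj : j + 1 ≤ n) :
    aeval (MonoidAlgebra.of ℚ G b) (cyclotomic (p ^ (j + 1)) ℚ) *
        hatQ (A ⊔ zpowers (b ^ p ^ (j + 1))) = (p : ℚ) • hatQ (A ⊔ zpowers (b ^ p ^ j)) := by
  have := normal_of_le hAb (le_sup_left : A ≤ A ⊔ zpowers (b ^ p ^ (j + 1)))
  have hord : orderOf ((b ^ p ^ j : G) : G ⧸ A ⊔ zpowers (b ^ p ^ (j + 1))) = p := by
    refine orderOf_mk_eq_of_forall_zpow_mem_iff fun t => ?_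
    rw [← zpow_natCast b (p ^ j), ← zpow_mul,
      zpow_mem_sup_zpowers_pow_iff hdisj (hb ▸ pow_dvd_pow p hj), pow_succ, Nat.cast_mul,
      mul_dvd_mul_iff_left (by exact_mod_cast (pow_pos hp.pos j).ne')]
  have := sum_pow_of_mul_hatQ (sup_zpowers_pow_succ_le A b p j) (mem_sup_right (mem_zpowers _))
    (fun h hh => mk_mem_zpowers_of_mem_sup le_sup_left hh)
  rw [hord] at this
  rw [cyclotomic_prime_pow_eq_geom_sum hp, map_sum]
  simpa only [map_pow, aeval_X] using this

theorem map_hatQ_sup_zpowers_pow_eq_zero {j : ℕ} (hj : j + 1 ≤ n) {K : Type*} [Field K]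
    [Algebra ℚ K] (φ : MonoidAlgebra ℚ G →ₐ[ℚ] K)
    (hφb : IsPrimitiveRoot (φ (MonoidAlgebra.of ℚ G b)) (p ^ (j + 1))) :
    φ (hatQ (A ⊔ zpowers (b ^ p ^ j))) = 0 := by
  have h := congrArg φ (aeval_cyclotomic_mul_hatQ_sup_zpowers hAb hdisj hp hb hj)
  rw [map_mul, ← aeval_algHom_apply, aeval_cyclotomic_eq_zero (pow_pos hp.pos _) hφb, zero_mul,
    map_smul] at h
  exact (smul_eq_zero.mp h.symm).resolve_left (Nat.cast_ne_zero.mpr hp.ne_zero)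

theorem epsQ_top_sup_zpowers_pow_succ {j : ℕ} (hj : j + 1 ≤ n) :
    epsQ ⊤ (A ⊔ zpowers (b ^ p ^ (j + 1))) =
      hatQ (A ⊔ zpowers (b ^ p ^ (j + 1))) - hatQ (A ⊔ zpowers (b ^ p ^ j)) := by
  have hnotMem : b ^ p ^ j ∉ A ⊔ zpowers (b ^ p ^ (j + 1)) := fun h => by
    have := (zpow_mem_sup_zpowers_pow_iff hdisj (hb ▸ pow_dvd_pow p hj) (p ^ j : ℕ)).mp
      (by rwa [zpow_natCast])
    exact absurd (Int.natCast_dvd_natCast.mp this)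
      (Nat.pow_dvd_pow_iff_le_right hp.one_lt |>.not.mpr (by omega))
  refine epsQ_eq_hatQ_sub_hatQ (lt_of_le_of_ne (sup_zpowers_pow_succ_le A b p j)
      fun h => hnotMem (h ▸ mem_sup_right (mem_zpowers _)))
    le_top (fun g _ x hx => (normal_of_le hAb le_sup_left).conj_mem x hx g)
    (fun M _ hM _ => sup_zpowers_pow_le_of_lt hAb hdisj hp hb hj hM)

theorem epsQ_top_sup_zpowers_pow_spec {i : ℕ} (hi : i ≤ n) {K : Type*} [Field K] [Algebra ℚ K]
    (φ : MonoidAlgebra ℚ G →ₐ[ℚ] K)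
    (hφL : ∀ l ∈ A ⊔ zpowers (b ^ p ^ i), φ (MonoidAlgebra.of ℚ G l) = 1)
    (hφb : IsPrimitiveRoot (φ (MonoidAlgebra.of ℚ G b)) (p ^ i)) :
    epsQ ⊤ (A ⊔ zpowers (b ^ p ^ i)) ∈ Subring.center (MonoidAlgebra ℚ G) ∧
      epsQ ⊤ (A ⊔ zpowers (b ^ p ^ i)) * epsQ ⊤ (A ⊔ zpowers (b ^ p ^ i)) =
        epsQ ⊤ (A ⊔ zpowers (b ^ p ^ i)) ∧
      φ (epsQ ⊤ (A ⊔ zpowers (b ^ p ^ i))) = 1 ∧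
      aeval (MonoidAlgebra.of ℚ G b) (cyclotomic (p ^ i) ℚ) *
        epsQ ⊤ (A ⊔ zpowers (b ^ p ^ i)) = 0 := by
  rcases i with _ | j
  · have hL : A ⊔ zpowers (b ^ p ^ 0) = ⊤ := by rwa [pow_zero, pow_one]
    rw [hL] at hφL ⊢
    rw [epsQ, if_pos rfl]
    exact ⟨hatQ_mem_center, hatQ_mul_hatQ_of_le le_rfl, map_hatQ_eq_one_s12 φ hφL,
      by rw [pow_zero, cyclotomic_one, map_sub, aeval_X, map_one, sub_mul, one_mul,
        of_mul_hatQ (mem_top b), sub_self]⟩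
  have := normal_of_le hAb (le_sup_left : A ≤ A ⊔ zpowers (b ^ p ^ j))
  have := normal_of_le hAb (le_sup_left : A ≤ A ⊔ zpowers (b ^ p ^ (j + 1)))
  have hle := sup_zpowers_pow_succ_le A b p j
  have hcyc : aeval (MonoidAlgebra.of ℚ G b) (cyclotomic (p ^ (j + 1)) ℚ) *
      hatQ (A ⊔ zpowers (b ^ p ^ j)) = (p : ℚ) • hatQ (A ⊔ zpowers (b ^ p ^ j)) := by
    rw [cyclotomic_prime_pow_eq_geom_sum hp, map_sum]
    simpa only [map_pow, aeval_X] using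
      sum_pow_of_mul_hatQ_of_mem (S := A ⊔ zpowers (b ^ p ^ j)) (mem_sup_right (mem_zpowers _)) p
  rw [epsQ_top_sup_zpowers_pow_succ hAb hdisj hp hb hi]
  refine ⟨sub_mem hatQ_mem_center hatQ_mem_center, ?_, ?_, ?_⟩
  · rw [mul_sub, sub_mul, sub_mul, hatQ_mul_hatQ_of_le le_rfl, hatQ_mul_hatQ_of_le hle,
      hatQ_mul_hatQ_of_ge hle, hatQ_mul_hatQ_of_le le_rfl]
    abel
  · rw [map_sub, map_hatQ_eq_one_s12 φ hφL,
      map_hatQ_sup_zpowers_pow_eq_zero hAb hdisj hp hb hi φ hφb, sub_zero]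
  · rw [mul_sub, aeval_cyclotomic_mul_hatQ_sup_zpowers hAb hdisj hp hb hi, hcyc, sub_self]

theorem epsQ_top_sup_zpowers_pow_mem_center_and_nonempty_ringEquiv {i : ℕ} (hi : i ≤ n)
    (pi : ℕ+) (hpi : (pi : ℕ) = p ^ i) :
    epsQ ⊤ (A ⊔ zpowers (b ^ p ^ i)) ∈ Subring.center (MonoidAlgebra ℚ G) ∧
      epsQ ⊤ (A ⊔ zpowers (b ^ p ^ i)) * epsQ ⊤ (A ⊔ zpowers (b ^ p ^ i)) =
        epsQ ⊤ (A ⊔ zpowers (b ^ p ^ i)) ∧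
      Nonempty (componentNUS (epsQ ⊤ (A ⊔ zpowers (b ^ p ^ i))) ≃+* CyclotomicField pi ℚ) := by
  have hAL : A ≤ A ⊔ zpowers (b ^ p ^ i) := le_sup_left
  have := normal_of_le hAb hAL
  have hbL := forall_mem_zpowers_mk hAb hAL
  have hord : orderOf (b : G ⧸ A ⊔ zpowers (b ^ p ^ i)) = pi :=
    (orderOf_mk_eq_of_forall_zpow_mem_iff
      (zpow_mem_sup_zpowers_pow_iff hdisj (hb ▸ pow_dvd_pow p hi))).trans hpi.symm
  -- instance search equips `CyclotomicField pi ℚ` with `DivisionRing.toRatAlgebra`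
  have : IsCyclotomicExtension {(pi : ℕ)} ℚ (CyclotomicField pi ℚ) := by
    convert CyclotomicField.isCyclotomicExtension (pi : ℕ) ℚ
    · rfl
    · exact Subsingleton.elim _ _
  have hζ := IsCyclotomicExtension.zeta_spec (pi : ℕ) ℚ (CyclotomicField pi ℚ)
  obtain ⟨φ, hφb, hφL⟩ := exists_algHom_of_forall_mem_zpowers hbL (k := ℚ)
    (by rw [hord]; exact hζ.pow_eq_one)
  rw [← hφb] at hζ
  obtain ⟨hcenter, hidem, hφε, hcyc⟩ :=
    epsQ_top_sup_zpowers_pow_spec hAb hdisj hp hb hi φ hφL (hpi ▸ hζ)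
  exact ⟨hcenter, hidem, nonempty_componentNUS_ringEquiv_of_isPrimitiveRoot hbL hidem
    (fun l hl => of_mul_epsQ hl) φ hζ hφε (hpi ▸ hcyc)⟩

end SemidirectProduct

theorem statement12_general
    {G : Type*} [Group G] [Fintype G]
    (p q : ℕ) (hp : p.Prime) (hq : q.Prime) (hpq : p ≠ q)
    (m n : ℕ)
    (a b : G) (r : ℕ)
    (ha : orderOf a = q ^ m) (hb : orderOf b = p ^ n)
    (hab : b⁻¹ * a * b = a ^ r)
    (hgen : Subgroup.closure ({a, b} : Set G) = ⊤)
    (i : ℕ) (hi : i ≤ n) (pi : ℕ+) (hpi : (pi : ℕ) = p ^ i) :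
    epsQ (⊤ : Subgroup G) (Subgroup.closure ({a, b ^ p ^ i} : Set G)) ∈
      Subring.center (MonoidAlgebra ℚ G) ∧
    epsQ (⊤ : Subgroup G) (Subgroup.closure ({a, b ^ p ^ i} : Set G)) *
        epsQ (⊤ : Subgroup G) (Subgroup.closure ({a, b ^ p ^ i} : Set G)) =
      epsQ (⊤ : Subgroup G) (Subgroup.closure ({a, b ^ p ^ i} : Set G)) ∧
    Nonempty ((componentNUS (epsQ (⊤ : Subgroup G)
        (Subgroup.closure ({a, b ^ p ^ i} : Set G)))) ≃+* CyclotomicField pi ℚ) := by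
  have := zpowers_normal_of_conj_mem hgen (hab ▸ pow_mem (mem_zpowers a) r)
  have hAb : zpowers a ⊔ zpowers b = ⊤ := closure_pair_eq_sup_zpowers a b ▸ hgen
  have hdisj : Disjoint (zpowers a) (zpowers b) := disjoint_of_coprime_natCard <| by
    rw [Nat.card_zpowers, Nat.card_zpowers, ha, hb]
    exact Nat.Coprime.pow _ _ ((Nat.coprime_primes hq hp).mpr hpq.symm)
  rw [closure_pair_eq_sup_zpowers]
  exact epsQ_top_sup_zpowers_pow_mem_center_and_nonempty_ringEquiv hAb hdisj hp hb hi pi hpi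

/-- For `G = C_(q^m) ⋊ C_(p^n)` with faithful action and
`L_i = ⟨a, b^(p^i)⟩`, the element `ε(G, L_i)` is a central idempotent of `ℚG` and
`ℚG·ε(G, L_i) ≅ ℚ(ζ_(p^i))`. -/
theorem statement12
    {G : Type*} [Group G] [Fintype G]
    (p q : ℕ) (hp : p.Prime) (hq : q.Prime) (hpq : p ≠ q)
    (m n : ℕ) (hm : 1 ≤ m) (hn : 1 ≤ n)
    (a b : G) (r : ℕ)
    (ha : orderOf a = q ^ m) (hb : orderOf b = p ^ n)
    (hab : b⁻¹ * a * b = a ^ r)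
    (hgen : Subgroup.closure ({a, b} : Set G) = ⊤)
    (hcard : Nat.card G = q ^ m * p ^ n)
    (hfaith : orderOf ((r : ZMod (q ^ m))) = p ^ n)
    (i : ℕ) (hi : i ≤ n) (pi : ℕ+) (hpi : (pi : ℕ) = p ^ i) :
    epsQ (⊤ : Subgroup G) (Subgroup.closure ({a, b ^ p ^ i} : Set G)) ∈
      Subring.center (MonoidAlgebra ℚ G) ∧
    epsQ (⊤ : Subgroup G) (Subgroup.closure ({a, b ^ p ^ i} : Set G)) *
        epsQ (⊤ : Subgroup G) (Subgroup.closure ({a, b ^ p ^ i} : Set G)) =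
      epsQ (⊤ : Subgroup G) (Subgroup.closure ({a, b ^ p ^ i} : Set G)) ∧
    Nonempty ((componentNUS (epsQ (⊤ : Subgroup G)
        (Subgroup.closure ({a, b ^ p ^ i} : Set G)))) ≃+* CyclotomicField pi ℚ) :=
  statement12_general p q hp hq hpq m n a b r ha hb hab hgen i hi pi hpi

end

end ArXiv12091269
end
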